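/- arXiv:1404.3437 — 7 statements merged into one kernel-verified Lean document; each statement's English description precedes it below -/
import Mathlib

section
/- Let A be an n×n complex matrix with eigenvalues λ₁, …, λₙ. Then ∑ᵢ |λᵢ|² ≤ √(‖A‖⁴ − Δ_A), where Δ_A = ‖AA* − A*A‖²/2. -/
open Matrix Polynomial


theorem schur_aux : ∀ (n : ℕ) (A : Matrix (Fin n) (Fin n) ℂ),
    ∃ U T : Matrix (Fin n) (Fin n) ℂ,
      Uᴴ * U = 1 ∧ (∀ i j : Fin n, j < i → T i j = 0) ∧ A = U * T * Uᴴ := by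
  intro n
  induction n with
  | zero =>
    intro A
    refine ⟨1, A, ?_, fun i j _ => i.elim0, ?_⟩ <;>
      · ext i j; exact i.elim0
  | succ n ih =>
    intro A
    obtain ⟨μ, hμ⟩ := Module.End.exists_eigenvalue (Matrix.toEuclideanLin A)
    obtain ⟨v, hv⟩ := hμ.exists_hasEigenvector
    set u : EuclideanSpace ℂ (Fin (n+1)) := (‖v‖⁻¹ : ℂ) • v with hu_def
    have hu1 : ‖u‖ = 1 := norm_smul_inv_norm hv.2
    have huev : A *ᵥ (u : Fin (n+1) → ℂ) = μ • (u : Fin (n+1) → ℂ) := by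
      have h1 : Matrix.toEuclideanLin A v = μ • v := hv.apply_eq_smul
      have h2 : Matrix.toEuclideanLin A u = μ • u := by
        rw [hu_def, _root_.map_smul, h1, smul_comm]
      rw [Matrix.toEuclideanLin_apply] at h2
      exact congrArg WithLp.ofLp h2
    have hcard : Module.finrank ℂ (EuclideanSpace ℂ (Fin (n+1))) = Fintype.card (Fin (n+1)) := by
      simp [finrank_euclideanSpace_fin]
    have horth : Orthonormal ℂ (Set.restrict {(0 : Fin (n+1))} (fun _ => u)) := by
      constructor
      · intro i; exact hu1
      · intro i j hij
        exact absurd (Subtype.ext ((Set.mem_singleton_iff.mp i.2).trans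
          (Set.mem_singleton_iff.mp j.2).symm)) hij
    obtain ⟨b, hb⟩ := horth.exists_orthonormalBasis_extension_of_card_eq hcard
    have hb0 : b 0 = u := hb 0 rfl
    set U : Matrix (Fin (n+1)) (Fin (n+1)) ℂ := Matrix.of fun i j => b j i with hU_def
    have hbij : ∀ j k : Fin (n+1),
        ∑ i, (starRingEnd ℂ) (b j i) * b k i = if j = k then 1 else 0 := by
      intro j k
      have h := (orthonormal_iff_ite.mp b.orthonormal) j k
      rw [PiLp.inner_apply] at h
      simp [RCLike.inner_apply] at h
      rw [← h]; exact Finset.sum_congr rfl fun _ _ => mul_comm _ _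
    have hUU : Uᴴ * U = 1 := by
      ext j k
      simp only [Matrix.mul_apply, conjTranspose_apply, hU_def, Matrix.of_apply,
        Matrix.one_apply, RCLike.star_def]
      exact hbij j k
    have hU2 : U * Uᴴ = 1 := mul_eq_one_comm.mp hUU
    set B : Matrix (Fin (n+1)) (Fin (n+1)) ℂ := Uᴴ * A * U with hB_def
    have hAU0 : ∀ k, (A * U) k 0 = μ * b 0 k := by
      intro k
      have h := congrFun huev k
      rw [Pi.smul_apply, smul_eq_mul] at h
      rw [Matrix.mul_apply]
      simp only [hU_def, Matrix.of_apply, hb0]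
      rw [show ∑ j, A k j * u j = (A *ᵥ (u : Fin (n+1) → ℂ)) k from rfl, h]
    have hB0 : ∀ i : Fin (n+1), i ≠ 0 → B i 0 = 0 := by
      intro i hi
      have : B i 0 = ∑ k, (starRingEnd ℂ) (U k i) * ((A * U) k 0) := by
        rw [hB_def, Matrix.mul_assoc, Matrix.mul_apply]
        simp [conjTranspose_apply, RCLike.star_def]
      rw [this]
      have : ∑ k, (starRingEnd ℂ) (U k i) * ((A * U) k 0)
          = μ * ∑ k, (starRingEnd ℂ) (b i k) * b 0 k := by
        rw [Finset.mul_sum]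
        refine Finset.sum_congr rfl fun k _ => ?_
        rw [hAU0 k]; simp [hU_def]; ring
      rw [this, hbij i 0, if_neg hi, mul_zero]
    obtain ⟨U₁, T₁, hU₁, hT₁, hA₁⟩ := ih (B.submatrix Fin.succ Fin.succ)
    set A₁ : Matrix (Fin n) (Fin n) ℂ := B.submatrix Fin.succ Fin.succ with hA₁_def
    set W : Matrix (Fin (n+1)) (Fin (n+1)) ℂ := Matrix.of fun i j =>
      Fin.cases (Fin.cases (1:ℂ) (fun _ => 0) j) (fun i' => Fin.cases 0 (fun j' => U₁ i' j') j) i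
      with hW_def
    have hW00 : W 0 0 = 1 := by simp [hW_def]
    have hW0s : ∀ j, W 0 (Fin.succ j) = 0 := by intro j; simp [hW_def]
    have hWs0 : ∀ i, W (Fin.succ i) 0 = 0 := by intro i; simp [hW_def]
    have hWss : ∀ i j, W (Fin.succ i) (Fin.succ j) = U₁ i j := by intro i j; simp [hW_def]
    have hU₁e : ∀ i j : Fin n, ∑ k, (starRingEnd ℂ) (U₁ k i) * U₁ k j
        = if i = j then 1 else 0 := by
      intro i j
      have h := congrFun (congrFun hU₁ i) j
      rw [Matrix.mul_apply] at h
      simp only [conjTranspose_apply, RCLike.star_def, Matrix.one_apply] at h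
      exact h
    have hW1 : Wᴴ * W = 1 := by
      ext i j
      rw [Matrix.mul_apply]
      simp only [conjTranspose_apply, RCLike.star_def]
      rw [Fin.sum_univ_succ]
      induction i using Fin.cases with
      | zero =>
        induction j using Fin.cases with
        | zero => simp [hW00, hWs0, Matrix.one_apply]
        | succ j' => simp [hW00, hW0s, hWs0, Matrix.one_apply, (Fin.succ_ne_zero j').symm]
      | succ i' =>
        induction j using Fin.cases with
        | zero => simp [hW00, hW0s, hWs0, Matrix.one_apply, Fin.succ_ne_zero i']
        | succ j' =>
          simp only [hW0s, hWss, map_zero, zero_mul, zero_add]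
          rw [hU₁e i' j']
          simp [Matrix.one_apply, Fin.succ_inj]
    have hW2 : W * Wᴴ = 1 := mul_eq_one_comm.mp hW1
    set T : Matrix (Fin (n+1)) (Fin (n+1)) ℂ := Wᴴ * B * W with hT_def
    have hWB : ∀ i l, (Wᴴ * B) (Fin.succ i) l
        = ∑ k, (starRingEnd ℂ) (U₁ k i) * B (Fin.succ k) l := by
      intro i l
      rw [Matrix.mul_apply, Fin.sum_univ_succ]
      simp only [conjTranspose_apply, RCLike.star_def, hW0s, map_zero, zero_mul, zero_add, hWss]
    have hT_col : ∀ i : Fin n, T (Fin.succ i) 0 = 0 := by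
      intro i
      rw [hT_def, Matrix.mul_apply, Fin.sum_univ_succ]
      rw [hWB i 0]
      simp only [hWs0, mul_zero, Finset.sum_const_zero, add_zero, hW00, mul_one]
      rw [Finset.sum_eq_zero]
      intro k _
      rw [hB0 (Fin.succ k) (Fin.succ_ne_zero k), mul_zero]
    have hT_ss : ∀ i j : Fin n, T (Fin.succ i) (Fin.succ j) = (U₁ᴴ * A₁ * U₁) i j := by
      intro i j
      rw [hT_def, Matrix.mul_apply, Fin.sum_univ_succ, hW0s, mul_zero, zero_add]
      rw [Matrix.mul_apply]
      refine Finset.sum_congr rfl fun l _ => ?_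
      rw [hWB i (Fin.succ l), hWss, Matrix.mul_apply]
      congr 1
    have hUAU : U₁ᴴ * A₁ * U₁ = T₁ := by
      rw [hA₁]
      calc U₁ᴴ * (U₁ * T₁ * U₁ᴴ) * U₁
          = (U₁ᴴ * U₁) * T₁ * (U₁ᴴ * U₁) := by simp only [Matrix.mul_assoc]
        _ = T₁ := by rw [hU₁]; simp
    refine ⟨U * W, T, ?_, ?_, ?_⟩
    · rw [conjTranspose_mul]
      calc Wᴴ * Uᴴ * (U * W) = Wᴴ * (Uᴴ * U) * W := by simp only [Matrix.mul_assoc]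
        _ = 1 := by rw [hUU]; simpa using hW1
    · intro i j hlt
      induction j using Fin.cases with
      | zero =>
        induction i using Fin.cases with
        | zero => exact absurd hlt (lt_irrefl _)
        | succ i' => exact hT_col i'
      | succ j' =>
        induction i using Fin.cases with
        | zero => exact absurd hlt (Fin.not_lt_zero _)
        | succ i' =>
          rw [hT_ss, hUAU]
          exact hT₁ i' j' (by rwa [Fin.succ_lt_succ_iff] at hlt)
    · rw [conjTranspose_mul, hT_def]
      calc A = (U * Uᴴ) * A * (U * Uᴴ) := by rw [hU2]; simp
        _ = U * (W * Wᴴ) * B * (W * Wᴴ) * Uᴴ := by rw [hW2, hB_def]; simp only [Matrix.mul_assoc, Matrix.mul_one, Matrix.one_mul]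
        _ = U * W * (Wᴴ * B * W) * (Wᴴ * Uᴴ) := by simp only [Matrix.mul_assoc]


theorem charpoly_conj_aux {n : ℕ} (U T V : Matrix (Fin n) (Fin n) ℂ)
    (h1 : U * V = 1) (h2 : V * U = 1) :
    (U * T * V).charpoly = T.charpoly := by
  have hmap : ∀ M N : Matrix (Fin n) (Fin n) ℂ,
      (M * N).map (⇑(Polynomial.C : ℂ →+* ℂ[X])) = M.map ⇑(Polynomial.C : ℂ →+* ℂ[X]) * N.map ⇑(Polynomial.C : ℂ →+* ℂ[X]) :=
    fun M N => Matrix.map_mul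
  have hcm : charmatrix (U * T * V)
      = U.map ⇑(Polynomial.C : ℂ →+* ℂ[X]) * charmatrix T * V.map ⇑(Polynomial.C : ℂ →+* ℂ[X]) := by
    unfold charmatrix
    rw [RingHom.mapMatrix_apply, RingHom.mapMatrix_apply, Matrix.mul_sub, Matrix.sub_mul, hmap, hmap]
    congr 1
    · -- U' * (X • 1)? : scalar part
      have : (Matrix.scalar (Fin n) (X : ℂ[X])) = (X : ℂ[X]) • (1 : Matrix (Fin n) (Fin n) ℂ[X]) := by
        ext i j; simp [Matrix.scalar_apply, Matrix.smul_apply, Matrix.one_apply, Matrix.diagonal_apply]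
      rw [this]
      rw [Matrix.mul_smul, Matrix.smul_mul, Matrix.mul_one]
      rw [← hmap, h1]
      simp
  rw [Matrix.charpoly, hcm, det_mul, det_mul, Matrix.charpoly]
  have : U.map ⇑(Polynomial.C : ℂ →+* ℂ[X]) * V.map ⇑(Polynomial.C : ℂ →+* ℂ[X]) = 1 := by
    rw [← hmap, h1]; simp
  have hdet : (U.map ⇑(Polynomial.C : ℂ →+* ℂ[X])).det * (V.map ⇑(Polynomial.C : ℂ →+* ℂ[X])).det = 1 := by
    rw [← det_mul, this, det_one]
  calc (U.map ⇑(Polynomial.C : ℂ →+* ℂ[X])).det * (charmatrix T).det * (V.map ⇑(Polynomial.C : ℂ →+* ℂ[X])).det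
      = (charmatrix T).det * ((U.map ⇑(Polynomial.C : ℂ →+* ℂ[X])).det * (V.map ⇑(Polynomial.C : ℂ →+* ℂ[X])).det) := by ring
    _ = (charmatrix T).det := by rw [hdet, mul_one]

theorem roots_triangular {n : ℕ} (T : Matrix (Fin n) (Fin n) ℂ)
    (hT : ∀ i j : Fin n, j < i → T i j = 0) :
    T.charpoly.roots = Multiset.map (fun i => T i i) Finset.univ.val := by
  have hbt : T.BlockTriangular id := fun i j h => hT i j h
  rw [Matrix.charpoly_of_upperTriangular T hbt]
  rw [Finset.prod_eq_multiset_prod,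
    show (Multiset.map (fun i => X - Polynomial.C (T i i)) Finset.univ.val)
        = Multiset.map (fun a : ℂ => X - Polynomial.C a)
          (Multiset.map (fun i => T i i) Finset.univ.val) from
      by rw [Multiset.map_map]; rfl]
  exact Polynomial.roots_multiset_prod_X_sub_C _


noncomputable def frobF {n : ℕ} (B : Matrix (Fin n) (Fin n) ℂ) : ℝ :=
  ∑ i, ∑ j, ‖B i j‖ ^ 2

theorem frobF_eq_trace {n : ℕ} (B : Matrix (Fin n) (Fin n) ℂ) :
    frobF B = (Matrix.trace (B * Bᴴ)).re := by
  rw [Matrix.trace, Complex.re_sum]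
  refine Finset.sum_congr rfl fun i _ => ?_
  rw [Matrix.diag_apply, Matrix.mul_apply, Complex.re_sum]
  refine Finset.sum_congr rfl fun j _ => ?_
  rw [conjTranspose_apply, RCLike.star_def, Complex.mul_conj, Complex.sq_norm]
  simp

theorem core_identity {n : ℕ} (T : Matrix (Fin n) (Fin n) ℂ) :
    frobF (T * Tᴴ - Tᴴ * T) = 2 * frobF (T * Tᴴ) - 2 * frobF (T * T) := by
  have hX : (T * Tᴴ)ᴴ = T * Tᴴ := by rw [conjTranspose_mul, conjTranspose_conjTranspose]
  have hY : (Tᴴ * T)ᴴ = Tᴴ * T := by rw [conjTranspose_mul, conjTranspose_conjTranspose]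
  have hTT : (T * T)ᴴ = Tᴴ * Tᴴ := by rw [conjTranspose_mul]
  rw [frobF_eq_trace, frobF_eq_trace, frobF_eq_trace]
  rw [conjTranspose_sub, hX, hY, hTT]
  rw [Matrix.sub_mul, Matrix.mul_sub, Matrix.mul_sub, Matrix.trace_sub, Matrix.trace_sub,
    Matrix.trace_sub]
  have c3 : trace (Tᴴ * T * (T * Tᴴ)) = trace (T * Tᴴ * (Tᴴ * T)) := trace_mul_comm _ _
  have c1 : trace (Tᴴ * T * (Tᴴ * T)) = trace (T * Tᴴ * (T * Tᴴ)) := by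
    calc trace (Tᴴ * T * (Tᴴ * T)) = trace (Tᴴ * (T * (Tᴴ * T))) := by rw [Matrix.mul_assoc]
      _ = trace ((T * (Tᴴ * T)) * Tᴴ) := trace_mul_comm _ _
      _ = trace (T * Tᴴ * (T * Tᴴ)) := by simp only [Matrix.mul_assoc]
  have c2 : trace (T * Tᴴ * (Tᴴ * T)) = trace (T * T * (Tᴴ * Tᴴ)) := by
    calc trace (T * Tᴴ * (Tᴴ * T)) = trace (T * (Tᴴ * (Tᴴ * T))) := by rw [Matrix.mul_assoc]
      _ = trace ((Tᴴ * (Tᴴ * T)) * T) := trace_mul_comm _ _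
      _ = trace ((Tᴴ * Tᴴ) * (T * T)) := by simp only [Matrix.mul_assoc]
      _ = trace (T * T * (Tᴴ * Tᴴ)) := trace_mul_comm _ _
  rw [c3, c1, c2]
  simp only [Complex.sub_re]
  ring

theorem pair_bound {n : ℕ} (T : Matrix (Fin n) (Fin n) ℂ)
    (hT : ∀ i j : Fin n, j < i → T i j = 0) (i j : Fin n) (hij : i < j) :
    ‖(T * Tᴴ) i j‖ ^ 2 + ‖T i i‖ ^ 2 * ‖T j j‖ ^ 2
      ≤ (∑ k, ‖T i k‖ ^ 2) * (∑ k, ‖T j k‖ ^ 2) := by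
  set a : Fin n → ℝ := fun k => if j ≤ k then ‖T i k‖ else 0 with ha
  set b : Fin n → ℝ := fun k => ‖T j k‖ with hb
  have step1 : ‖(T * Tᴴ) i j‖ ≤ ∑ k, a k * b k := by
    rw [Matrix.mul_apply]
    have hre : ∀ k : Fin n, T i k * Tᴴ k j
        = (if j ≤ k then T i k else 0) * (starRingEnd ℂ) (T j k) := by
      intro k
      rw [conjTranspose_apply, RCLike.star_def]
      by_cases h : j ≤ k
      · rw [if_pos h]
      · rw [if_neg h, hT j k (not_le.mp h), map_zero, mul_zero, zero_mul]
    rw [Finset.sum_congr rfl fun k _ => hre k]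
    refine le_trans (norm_sum_le _ _) ?_
    refine le_of_eq (Finset.sum_congr rfl fun k _ => ?_)
    rw [norm_mul, Complex.norm_conj, ha, hb]
    by_cases h : j ≤ k
    · simp [h]
    · simp [h]
  have step2 : ‖(T * Tᴴ) i j‖ ^ 2 ≤ (∑ k, a k ^ 2) * (∑ k, b k ^ 2) := by
    refine le_trans (pow_le_pow_left₀ (norm_nonneg _) step1 2) ?_
    exact Finset.sum_mul_sq_le_sq_mul_sq _ _ _
  have step5 : ‖T j j‖ ^ 2 ≤ ∑ k, b k ^ 2 := by
    refine Finset.single_le_sum (f := fun k => b k ^ 2) (fun k _ => by positivity)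
      (Finset.mem_univ j)
  have step4 : (∑ k, a k ^ 2) + ‖T i i‖ ^ 2 ≤ ∑ k, ‖T i k‖ ^ 2 := by
    have : ‖T i i‖ ^ 2
        = ∑ k, if k = i then ‖T i i‖ ^ 2 else 0 := by
      rw [Finset.sum_ite_eq' Finset.univ i (fun _ => ‖T i i‖ ^ 2)]
      simp
    rw [this, ← Finset.sum_add_distrib]
    refine Finset.sum_le_sum fun k _ => ?_
    by_cases hk : k = i
    · subst hk
      rw [if_pos rfl, ha]
      simp [not_le.mpr hij]
    · rw [if_neg hk, add_zero, ha]
      by_cases h : j ≤ k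
      · simp [h]
      · simp [h] <;> positivity
  have hb2 : (∑ k, b k ^ 2) = ∑ k, ‖T j k‖ ^ 2 := rfl
  have hbnn : (0:ℝ) ≤ ∑ k, b k ^ 2 := Finset.sum_nonneg fun k _ => by positivity
  calc ‖(T * Tᴴ) i j‖ ^ 2 + ‖T i i‖ ^ 2 * ‖T j j‖ ^ 2
      ≤ (∑ k, a k ^ 2) * (∑ k, b k ^ 2) + ‖T i i‖ ^ 2 * (∑ k, b k ^ 2) := by
        refine add_le_add step2 ?_
        exact mul_le_mul_of_nonneg_left step5 (by positivity)
    _ = ((∑ k, a k ^ 2) + ‖T i i‖ ^ 2) * (∑ k, b k ^ 2) := by ring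
    _ ≤ (∑ k, ‖T i k‖ ^ 2) * (∑ k, ‖T j k‖ ^ 2) := by
        rw [← hb2]
        exact mul_le_mul_of_nonneg_right step4 hbnn

theorem diag_eq {n : ℕ} (T : Matrix (Fin n) (Fin n) ℂ) (i : Fin n) :
    ‖(T * Tᴴ) i i‖ ^ 2 = (∑ k, ‖T i k‖ ^ 2) ^ 2 := by
  have : (T * Tᴴ) i i = ((∑ k, ‖T i k‖ ^ 2 : ℝ) : ℂ) := by
    rw [Matrix.mul_apply, Complex.ofReal_sum]
    refine Finset.sum_congr rfl fun k _ => ?_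
    rw [conjTranspose_apply, RCLike.star_def, Complex.mul_conj, Complex.sq_norm]
  rw [this, Complex.norm_real, Real.norm_eq_abs, abs_of_nonneg (Finset.sum_nonneg fun k _ => by positivity)]

theorem offdiag_abs {n : ℕ} (T : Matrix (Fin n) (Fin n) ℂ) (i j : Fin n) :
    ‖(T * Tᴴ) i j‖ = ‖(T * Tᴴ) j i‖ := by
  have h : (T * Tᴴ) i j = (starRingEnd ℂ) ((T * Tᴴ) j i) := by
    have hX : (T * Tᴴ)ᴴ = T * Tᴴ := by rw [conjTranspose_mul, conjTranspose_conjTranspose]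
    conv_lhs => rw [← hX]
    rw [conjTranspose_apply, RCLike.star_def]
  rw [h, Complex.norm_conj]

theorem frob_TTh_bound {n : ℕ} (T : Matrix (Fin n) (Fin n) ℂ)
    (hT : ∀ i j : Fin n, j < i → T i j = 0) :
    frobF (T * Tᴴ) + (∑ i, ‖T i i‖ ^ 2) ^ 2
      ≤ (frobF T) ^ 2 + ∑ i, (‖T i i‖ ^ 2) ^ 2 := by
  have key : ∀ i j : Fin n,
      ‖(T * Tᴴ) i j‖ ^ 2 + ‖T i i‖ ^ 2 * ‖T j j‖ ^ 2
        ≤ (∑ k, ‖T i k‖ ^ 2) * (∑ k, ‖T j k‖ ^ 2)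
          + (if j = i then (‖T i i‖ ^ 2) * (‖T i i‖ ^ 2) else 0) := by
    intro i j
    rcases lt_trichotomy i j with h | h | h
    · rw [if_neg (ne_of_gt h)]
      simpa using pair_bound T hT i j h
    · subst h
      rw [if_pos rfl, diag_eq]
      exact le_of_eq (by ring)
    · rw [if_neg (ne_of_lt h)]
      rw [offdiag_abs]
      have := pair_bound T hT j i h
      linarith
  have hsum : ∑ i, ∑ j, (‖(T * Tᴴ) i j‖ ^ 2
        + ‖T i i‖ ^ 2 * ‖T j j‖ ^ 2)
      ≤ ∑ i, ∑ j, ((∑ k, ‖T i k‖ ^ 2) * (∑ k, ‖T j k‖ ^ 2)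
        + (if j = i then (‖T i i‖ ^ 2) * (‖T i i‖ ^ 2) else 0)) :=
    Finset.sum_le_sum fun i _ => Finset.sum_le_sum fun j _ => key i j
  have e1 : ∑ i : Fin n, ∑ j : Fin n, (‖(T * Tᴴ) i j‖ ^ 2
        + ‖T i i‖ ^ 2 * ‖T j j‖ ^ 2)
      = frobF (T * Tᴴ) + (∑ i, ‖T i i‖ ^ 2) ^ 2 := by
    simp only [Finset.sum_add_distrib, ← Finset.mul_sum, ← Finset.sum_mul]
    rw [frobF, sq]
  have e2 : ∑ i : Fin n, ∑ j : Fin n, ((∑ k, ‖T i k‖ ^ 2) * (∑ k, ‖T j k‖ ^ 2)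
        + (if j = i then (‖T i i‖ ^ 2) * (‖T i i‖ ^ 2) else 0))
      = (frobF T) ^ 2 + ∑ i, (‖T i i‖ ^ 2) ^ 2 := by
    simp only [Finset.sum_add_distrib, ← Finset.mul_sum, ← Finset.sum_mul]
    congr 1
    · rw [frobF, sq]
    · refine Finset.sum_congr rfl fun i _ => ?_
      rw [Finset.sum_ite_eq' Finset.univ i
        (fun _ => (‖T i i‖ ^ 2) * (‖T i i‖ ^ 2))]
      simp [sq]
  rw [e1, e2] at hsum
  exact hsum

theorem diag_sq_le {n : ℕ} (T : Matrix (Fin n) (Fin n) ℂ)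
    (hT : ∀ i j : Fin n, j < i → T i j = 0) :
    ∑ i, (‖T i i‖ ^ 2) ^ 2 ≤ frobF (T * T) := by
  rw [frobF]
  refine Finset.sum_le_sum fun i _ => ?_
  have hdiag : (T * T) i i = T i i * T i i := by
    rw [Matrix.mul_apply]
    refine Finset.sum_eq_single i (fun k _ hk => ?_) (by simp)
    rcases lt_or_gt_of_ne hk with h | h
    · rw [hT i k h, zero_mul]
    · rw [hT k i h, mul_zero]
  calc (‖T i i‖ ^ 2) ^ 2 = ‖(T * T) i i‖ ^ 2 := by
        rw [hdiag, norm_mul]; ring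
    _ ≤ ∑ j, ‖(T * T) i j‖ ^ 2 := Finset.single_le_sum
        (f := fun j => ‖(T * T) i j‖ ^ 2) (fun j _ => by positivity)
        (Finset.mem_univ i)

theorem core_bound {n : ℕ} (T : Matrix (Fin n) (Fin n) ℂ)
    (hT : ∀ i j : Fin n, j < i → T i j = 0) :
    frobF (T * Tᴴ - Tᴴ * T) ≤ 2 * (frobF T) ^ 2 - 2 * (∑ i, ‖T i i‖ ^ 2) ^ 2 := by
  rw [core_identity]
  have h1 := frob_TTh_bound T hT
  have h2 := diag_sq_le T hT
  linarith

theorem frobF_conj {n : ℕ} (U X : Matrix (Fin n) (Fin n) ℂ)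
    (h1 : Uᴴ * U = 1) :
    frobF (U * X * Uᴴ) = frobF X := by
  rw [frobF_eq_trace, frobF_eq_trace]
  congr 1
  have hct : (U * X * Uᴴ)ᴴ = U * Xᴴ * Uᴴ := by
    simp only [conjTranspose_mul, conjTranspose_conjTranspose, Matrix.mul_assoc]
  rw [hct]
  have : U * X * Uᴴ * (U * Xᴴ * Uᴴ) = U * (X * Xᴴ) * Uᴴ := by
    calc U * X * Uᴴ * (U * Xᴴ * Uᴴ) = U * (X * ((Uᴴ * U) * (Xᴴ * Uᴴ))) := by
          simp only [Matrix.mul_assoc]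
      _ = U * (X * Xᴴ) * Uᴴ := by rw [h1]; simp only [Matrix.one_mul, Matrix.mul_assoc]
  rw [this, Matrix.trace_mul_cycle, ← Matrix.mul_assoc, h1, Matrix.one_mul]

theorem sum_sq_abs_eigenvalues_le_sqrt (n : ℕ)
    (A : Matrix (Fin n) (Fin n) ℂ)
    (frobSq : Matrix (Fin n) (Fin n) ℂ → ℝ)
    (hfrob : ∀ B, frobSq B = ∑ i, ∑ j, ‖B i j‖ ^ 2)
    (Δ : ℝ) (hΔ : Δ = frobSq (A * Aᴴ - Aᴴ * A) / 2) :
    ((A.charpoly.roots).map (fun z => ‖z‖ ^ 2)).sum ≤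
      Real.sqrt (frobSq A ^ 2 - Δ) := by
  obtain ⟨U, T, hUU, hT, hA⟩ := schur_aux n A
  have hU2 : U * Uᴴ = 1 := mul_eq_one_comm.mp hUU
  have hchar : A.charpoly = T.charpoly := by
    rw [hA]; exact charpoly_conj_aux U T Uᴴ hU2 hUU
  set S : ℝ := ∑ i, ‖T i i‖ ^ 2 with hS_def
  have hroots : ((A.charpoly.roots).map (fun z => ‖z‖ ^ 2)).sum = S := by
    rw [hchar, roots_triangular T hT, Multiset.map_map]
    rfl
  have hSnonneg : 0 ≤ S := Finset.sum_nonneg fun i _ => by positivity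
  have hfrobA : frobSq A = frobF T := by
    rw [hfrob, hA]
    exact frobF_conj U T hUU
  have hcomm : A * Aᴴ - Aᴴ * A = U * (T * Tᴴ - Tᴴ * T) * Uᴴ := by
    rw [hA]
    have hAh : (U * T * Uᴴ)ᴴ = U * Tᴴ * Uᴴ := by
      simp only [conjTranspose_mul, conjTranspose_conjTranspose, Matrix.mul_assoc]
    rw [hAh]
    have h1 : U * T * Uᴴ * (U * Tᴴ * Uᴴ) = U * (T * Tᴴ) * Uᴴ := by
      calc U * T * Uᴴ * (U * Tᴴ * Uᴴ) = U * (T * ((Uᴴ * U) * (Tᴴ * Uᴴ))) := by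
            simp only [Matrix.mul_assoc]
        _ = U * (T * Tᴴ) * Uᴴ := by rw [hUU]; simp only [Matrix.one_mul, Matrix.mul_assoc]
    have h2 : U * Tᴴ * Uᴴ * (U * T * Uᴴ) = U * (Tᴴ * T) * Uᴴ := by
      calc U * Tᴴ * Uᴴ * (U * T * Uᴴ) = U * (Tᴴ * ((Uᴴ * U) * (T * Uᴴ))) := by
            simp only [Matrix.mul_assoc]
        _ = U * (Tᴴ * T) * Uᴴ := by rw [hUU]; simp only [Matrix.one_mul, Matrix.mul_assoc]
    rw [h1, h2, ← Matrix.sub_mul, ← Matrix.mul_sub]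
  have hΔ' : Δ = frobF (T * Tᴴ - Tᴴ * T) / 2 := by
    rw [hΔ, hfrob, hcomm]
    congr 1
    exact frobF_conj U _ hUU
  have hcore := core_bound T hT
  rw [hroots, hfrobA]
  have hkey : S ^ 2 ≤ frobF T ^ 2 - Δ := by
    rw [hΔ']
    nlinarith [hcore]
  have hynn : 0 ≤ frobF T ^ 2 - Δ := le_trans (sq_nonneg S) hkey
  exact (Real.le_sqrt hSnonneg hynn).mpr hkey
end

section
/- Let n ≥ 1, 1 ≤ t ≤ n, and let s, q, Δ be nonnegative reals with Δ ≤ q²·n²/((2n−t)t). If n²s ≤ (n−t)√((ns+q)² − Δ), then s ≤ (n−t)/((2n−t)t) · ((n−t)q/n + √(q² − (2n−t)t·Δ/n²)). -/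
set_option maxHeartbeats 1000000


theorem real_ineq_implies_bound (n t : ℕ) (hn : 1 ≤ n) (ht : 1 ≤ t) (htn : t ≤ n)
    (s q Δ : ℝ) (hs : 0 ≤ s) (hq : 0 ≤ q) (hΔ0 : 0 ≤ Δ)
    (hΔ : Δ ≤ q ^ 2 * n ^ 2 / ((2 * n - t) * t))
    (h : (n : ℝ) ^ 2 * s ≤ ((n : ℝ) - t) * Real.sqrt (((n : ℝ) * s + q) ^ 2 - Δ)) :
    s ≤ ((n : ℝ) - t) / ((2 * (n : ℝ) - t) * t) *
        (((n : ℝ) - t) * q / n + Real.sqrt (q ^ 2 - (2 * (n : ℝ) - t) * t * Δ / n ^ 2)) := by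
  set N : ℝ := (n : ℝ) with hNdef
  set T : ℝ := (t : ℝ) with hTdef
  have hN1 : (1:ℝ) ≤ N := Nat.one_le_cast.mpr hn
  have hT1 : (1:ℝ) ≤ T := Nat.one_le_cast.mpr ht
  have hTN : T ≤ N := Nat.cast_le.mpr htn
  have hNpos : (0:ℝ) < N := by linarith
  have hc : (0:ℝ) ≤ N - T := by linarith
  have hK : (0:ℝ) < (2*N - T) * T := by nlinarith
  -- argument of the second sqrt is nonnegative
  rw [le_div_iff₀ hK] at hΔ
  have hR0 : 0 ≤ q^2 - (2*N - T) * T * Δ / N^2 := by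
    rw [sub_nonneg, div_le_iff₀ (by positivity)]
    nlinarith
  set R := Real.sqrt (q^2 - (2*N - T) * T * Δ / N^2) with hRdef
  have hRnn : 0 ≤ R := Real.sqrt_nonneg _
  have hR2 : R^2 = q^2 - (2*N - T) * T * Δ / N^2 := Real.sq_sqrt hR0
  by_cases hX : 0 ≤ (N*s + q)^2 - Δ
  · have hsq : (N^2*s)^2 ≤ (N-T)^2 * ((N*s+q)^2 - Δ) := by
      have h2 := pow_le_pow_left₀ (by positivity) h 2
      rwa [mul_pow (N-T) _ 2, Real.sq_sqrt hX] at h2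
    have hquad : N^2*((2*N-T)*T)*s^2 ≤ 2*N*q*(N-T)^2*s + (N-T)^2*(q^2 - Δ) := by
      nlinarith [hsq]
    have key : N*((2*N-T)*T)*s ≤ (N-T)*((N-T)*q + N*R) := by
      rcases le_or_gt (N*((2*N-T)*T)*s - (N-T)^2*q) 0 with h1 | h1
      · have h2 : 0 ≤ (N-T)*N*R := by positivity
        nlinarith
      · have hRR : ((N-T)*N*R)^2 = (N-T)^2*(N^2*q^2 - (2*N-T)*T*Δ) := by
          rw [mul_pow, mul_pow, hR2]
          field_simp
        have hmul := mul_le_mul_of_nonneg_left hquad hK.le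
        have hsq2 : (N*((2*N-T)*T)*s - (N-T)^2*q)^2 ≤ ((N-T)*N*R)^2 := by
          rw [hRR]; nlinarith [hmul]
        have h2 : 0 ≤ (N-T)*N*R := by positivity
        nlinarith [hsq2, h2, h1]
    have goal' : (N-T)/((2*N-T)*T) * ((N-T)*q/N + R)
        = ((N-T)*((N-T)*q + N*R)) / (((2*N-T)*T)*N) := by
      field_simp
    rw [goal', le_div_iff₀ (by positivity)]
    nlinarith [key]
  · push_neg at hX
    have hz : Real.sqrt ((N*s + q)^2 - Δ) = 0 := Real.sqrt_eq_zero_of_nonpos hX.le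
    rw [hz, mul_zero] at h
    have hs0 : s ≤ 0 := by
      by_contra hcon
      push_neg at hcon
      nlinarith [mul_pos (show (0:ℝ) < N^2 by positivity) hcon]
    have hpos : 0 ≤ (N-T)/((2*N-T)*T) * ((N-T)*q/N + R) := by
      apply mul_nonneg (div_nonneg hc hK.le)
      exact add_nonneg (div_nonneg (mul_nonneg hc hq) hNpos.le) hRnn
    linarith
end

section
/- Let A be an n×n complex matrix and λ an eigenvalue of A with geometric multiplicity t. Then |λ − tr(A)/n| ≤ √((n−t)/((2n−t)t)) · √((n−t)q_A/n + √(q_A² − (2n−t)t·Δ_A/n²)), where q_A = ‖A‖² − |tr(A)|²/n, Δ_A = ‖AA* − A*A‖²/2, and ‖·‖ is the Frobenius norm. -/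
open Matrix BigOperators

noncomputable section

namespace EigBound

set_option linter.unusedSectionVars false

attribute [local instance] Matrix.frobeniusSeminormedAddCommGroup

variable {k l k1 k2 l1 l2 : Type*} [Fintype k] [Fintype l] [Fintype k1] [Fintype k2]
  [Fintype l1] [Fintype l2]

lemma star_mul_self' (z : ℂ) : star z * z = ((‖z‖^2 : ℝ) : ℂ) := by
  rw [Complex.star_def, mul_comm, Complex.mul_conj, Complex.normSq_eq_norm_sq]

lemma mul_star_self' (z : ℂ) : z * star z = ((‖z‖^2 : ℝ) : ℂ) := by
  rw [Complex.star_def, Complex.mul_conj, Complex.normSq_eq_norm_sq]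

lemma frob_sq (X : Matrix k l ℂ) : ‖X‖ ^ 2 = ∑ i, ∑ j, ‖X i j‖ ^ 2 := by
  have h1 : ∀ (i : k) (j : l), ‖X i j‖ ^ (2:ℝ) = ‖X i j‖ ^ (2:ℕ) := fun i j => Real.rpow_natCast _ 2
  rw [Matrix.frobenius_norm_def]
  simp_rw [h1]
  rw [← Real.rpow_natCast ((∑ i, ∑ j, ‖X i j‖ ^ (2:ℕ)) ^ (1/2:ℝ)) 2,
    ← Real.rpow_mul (by positivity)]
  norm_num

lemma trace_mul_conjTranspose_self (X : Matrix k l ℂ) :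
    (X * Xᴴ).trace = (‖X‖ ^ 2 : ℝ) := by
  rw [frob_sq]
  push_cast
  simp only [Matrix.trace, Matrix.diag, Matrix.mul_apply, Matrix.conjTranspose_apply,
    Complex.star_def, Complex.mul_conj, Complex.normSq_eq_norm_sq]
  push_cast
  rfl

lemma delta_eq (X : Matrix k k ℂ) :
    ‖X * Xᴴ - Xᴴ * X‖ ^ 2 / 2 = ‖X * Xᴴ‖ ^ 2 - ‖X * X‖ ^ 2 := by
  have hP : (X * Xᴴ)ᴴ = X * Xᴴ := by simp [Matrix.conjTranspose_mul]
  have hK : (X * Xᴴ - Xᴴ * X)ᴴ = X * Xᴴ - Xᴴ * X := by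
    rw [Matrix.conjTranspose_sub, Matrix.conjTranspose_mul, Matrix.conjTranspose_mul]
    simp
  have h1 := trace_mul_conjTranspose_self (X * Xᴴ - Xᴴ * X)
  rw [hK] at h1
  have expand : (X * Xᴴ - Xᴴ * X) * (X * Xᴴ - Xᴴ * X)
      = (X*Xᴴ)*(X*Xᴴ) - (X*Xᴴ)*(Xᴴ*X) - (Xᴴ*X)*(X*Xᴴ) + (Xᴴ*X)*(Xᴴ*X) := by noncomm_ring
  have e2 : ((Xᴴ * X) * (Xᴴ * X)).trace = ((X * Xᴴ) * (X * Xᴴ)).trace := by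
    rw [show (Xᴴ * X) * (Xᴴ * X) = Xᴴ * (X * Xᴴ * X) by noncomm_ring,
      Matrix.trace_mul_comm, show X * Xᴴ * X * Xᴴ = (X * Xᴴ) * (X * Xᴴ) by noncomm_ring]
  have e3 : ((X * Xᴴ) * (Xᴴ * X)).trace = ((X * X) * (X * X)ᴴ).trace := by
    rw [Matrix.conjTranspose_mul, show (X * Xᴴ) * (Xᴴ * X) = X * (Xᴴ * Xᴴ * X) by noncomm_ring,
      Matrix.trace_mul_comm, show Xᴴ * Xᴴ * X * X = (Xᴴ * Xᴴ) * (X * X) by noncomm_ring,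
      Matrix.trace_mul_comm]
  have e4 : ((Xᴴ * X) * (X * Xᴴ)).trace = ((X * X) * (X * X)ᴴ).trace := by
    rw [Matrix.conjTranspose_mul, show (Xᴴ * X) * (X * Xᴴ) = Xᴴ * (X * X * Xᴴ) by noncomm_ring,
      Matrix.trace_mul_comm, show X * X * Xᴴ * Xᴴ = (X * X) * (Xᴴ * Xᴴ) by noncomm_ring]
  have hPP : ((X*Xᴴ)*(X*Xᴴ)).trace = (‖X*Xᴴ‖^2 : ℝ) := by
    conv_lhs => rw [show (X*Xᴴ)*(X*Xᴴ) = (X*Xᴴ)*(X*Xᴴ)ᴴ by rw [hP]]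
    exact trace_mul_conjTranspose_self _
  have hXX : ((X*X)*(X*X)ᴴ).trace = (‖X*X‖^2 : ℝ) := trace_mul_conjTranspose_self _
  rw [expand] at h1
  rw [Matrix.trace_add, Matrix.trace_sub, Matrix.trace_sub, e2, e3, e4, hPP, hXX] at h1
  have h2 : ((‖X*Xᴴ‖^2 : ℝ) : ℂ) - (‖X*X‖^2 : ℝ) - (‖X*X‖^2 : ℝ) + (‖X*Xᴴ‖^2 : ℝ)
      = (((2*‖X*Xᴴ‖^2 - 2*‖X*X‖^2 : ℝ)) : ℂ) := by push_cast; ring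
  rw [h2] at h1
  have h3 := Complex.ofReal_inj.mp h1
  linarith


lemma frob_sq_mul_le {m' : Type*} [Fintype m'] (X : Matrix k l ℂ) (Y : Matrix l m' ℂ) :
    ‖X * Y‖^2 ≤ ‖X‖^2 * ‖Y‖^2 := by
  have h := Matrix.frobenius_norm_mul X Y
  have h2 : ‖X * Y‖^2 ≤ (‖X‖*‖Y‖)^2 := pow_le_pow_left₀ (norm_nonneg _) h 2
  rw [mul_pow] at h2; exact h2

lemma frob_sq_smul_one [DecidableEq k] (z : ℂ) : ‖z • (1 : Matrix k k ℂ)‖^2 = (Fintype.card k) * ‖z‖^2 := by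
  rw [frob_sq]
  simp [Matrix.smul_apply, Matrix.one_apply, mul_ite, mul_one, mul_zero,
    apply_ite (fun w : ℂ => ‖w‖ ^ 2), Finset.sum_ite_eq, Finset.sum_const,
    Finset.card_univ]

lemma frob_sq_fromBlocks (W : Matrix k1 l1 ℂ) (X : Matrix k1 l2 ℂ) (Y : Matrix k2 l1 ℂ)
    (Z : Matrix k2 l2 ℂ) :
    ‖fromBlocks W X Y Z‖^2 = ‖W‖^2 + ‖X‖^2 + ‖Y‖^2 + ‖Z‖^2 := by
  simp_rw [frob_sq]
  rw [Fintype.sum_sum_type]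
  simp [Fintype.sum_sum_type, Finset.sum_add_distrib]
  ring

lemma trace_fromBlocks' (W : Matrix k1 k1 ℂ) (X : Matrix k1 k2 ℂ) (Y : Matrix k2 k1 ℂ)
    (Z : Matrix k2 k2 ℂ) :
    (fromBlocks W X Y Z).trace = W.trace + Z.trace := by
  simp [Matrix.trace, Fintype.sum_sum_type, Matrix.diag]

lemma frob_sq_submatrix {k' l' : Type*} [Fintype k'] [Fintype l'] (e : k' ≃ k) (f : l' ≃ l)
    (X : Matrix k l ℂ) : ‖X.submatrix e f‖^2 = ‖X‖^2 := by
  rw [frob_sq, frob_sq]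
  exact Fintype.sum_equiv e _ _ (fun i => Fintype.sum_equiv f _ _ (fun j => rfl))

lemma trace_submatrix' (e : k1 ≃ k) (X : Matrix k k ℂ) :
    (X.submatrix e e).trace = X.trace := by
  exact Fintype.sum_equiv e _ _ (fun i => rfl)


lemma comm_shift [DecidableEq k] (D : Matrix k k ℂ) (τ : ℂ) :
    (D - τ • 1) * (D - τ • 1)ᴴ - (D - τ • 1)ᴴ * (D - τ • 1) = D * Dᴴ - Dᴴ * D := by
  rw [Matrix.conjTranspose_sub, Matrix.conjTranspose_smul, Matrix.conjTranspose_one]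
  rw [Matrix.sub_mul, Matrix.mul_sub, Matrix.mul_sub, Matrix.sub_mul, Matrix.mul_sub,
    Matrix.mul_sub]
  simp only [Matrix.smul_mul, Matrix.mul_smul, Matrix.one_mul, Matrix.mul_one, smul_smul]
  rw [mul_comm (star τ) τ]
  abel

-- expansion of ‖D - τ•1‖²
lemma norm_sub_smul_one_sq [DecidableEq k] (D : Matrix k k ℂ) (τ : ℂ) :
    ((‖D - τ • (1 : Matrix k k ℂ)‖ ^ 2 : ℝ) : ℂ)
      = ((‖D‖ ^ 2 : ℝ) : ℂ) - star τ * D.trace - τ * star D.trace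
        + (Fintype.card k) * (τ * star τ) := by
  rw [← trace_mul_conjTranspose_self, ← trace_mul_conjTranspose_self]
  rw [Matrix.conjTranspose_sub, Matrix.conjTranspose_smul, Matrix.conjTranspose_one]
  rw [Matrix.sub_mul, Matrix.mul_sub, Matrix.mul_sub]
  simp only [Matrix.smul_mul, Matrix.mul_smul, Matrix.one_mul, Matrix.mul_one, smul_smul]
  rw [Matrix.trace_sub, Matrix.trace_sub, Matrix.trace_sub, Matrix.trace_smul,
    Matrix.trace_smul, Matrix.trace_smul, Matrix.trace_one, Matrix.trace_conjTranspose]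
  simp only [smul_eq_mul]
  ring

-- unitary conjugation invariance at the trace level
lemma conj_unitary_frob [DecidableEq k] {U : Matrix k k ℂ} (hU' : U * Uᴴ = 1) (X : Matrix k k ℂ) :
    ‖Uᴴ * X * U‖ ^ 2 = ‖X‖ ^ 2 := by
  have h1 : (Uᴴ * X * U) * (Uᴴ * X * U)ᴴ = Uᴴ * (X * (Xᴴ * U)) := by
    rw [Matrix.conjTranspose_mul, Matrix.conjTranspose_mul, Matrix.conjTranspose_conjTranspose]
    calc Uᴴ * X * U * (Uᴴ * (Xᴴ * U)) = Uᴴ * X * (U * Uᴴ) * (Xᴴ * U) := by noncomm_ring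
    _ = Uᴴ * (X * (Xᴴ * U)) := by rw [hU', Matrix.mul_one, Matrix.mul_assoc]
  have h2 : ((Uᴴ * X * U) * (Uᴴ * X * U)ᴴ).trace = (X * Xᴴ).trace := by
    rw [h1, Matrix.trace_mul_comm]
    calc (X * (Xᴴ * U) * Uᴴ).trace = (X * Xᴴ * (U * Uᴴ)).trace := by rw [Matrix.mul_assoc, Matrix.mul_assoc, Matrix.mul_assoc]
    _ = (X * Xᴴ).trace := by rw [hU', Matrix.mul_one]
  have h3 := trace_mul_conjTranspose_self (Uᴴ * X * U)
  rw [h2, trace_mul_conjTranspose_self X] at h3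
  exact_mod_cast h3.symm

set_option maxHeartbeats 1000000 in
lemma core (t p : ℕ) (htpos : 0 < t) (μ : ℂ) (C : Matrix (Fin t) (Fin p) ℂ)
    (D : Matrix (Fin p) (Fin p) ℂ)
    (htr : (fromBlocks (μ • 1) C 0 D : Matrix (Fin t ⊕ Fin p) (Fin t ⊕ Fin p) ℂ).trace = 0)
    (q Δ : ℝ)
    (hq : q = ‖(fromBlocks (μ • 1) C 0 D : Matrix (Fin t ⊕ Fin p) (Fin t ⊕ Fin p) ℂ)‖ ^ 2)
    (hΔ : Δ = ‖(fromBlocks (μ • 1) C 0 D) * (fromBlocks (μ • 1) C 0 D)ᴴ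
        - (fromBlocks (μ • 1) C 0 D)ᴴ * (fromBlocks (μ • 1) C 0 D :
          Matrix (Fin t ⊕ Fin p) (Fin t ⊕ Fin p) ℂ)‖ ^ 2 / 2) :
    ‖μ‖ ≤ Real.sqrt ((p : ℝ) / ((2 * ((t:ℝ) + p) - t) * t)) *
      Real.sqrt ((p : ℝ) * q / ((t:ℝ) + p) +
        Real.sqrt (q ^ 2 - (2 * ((t:ℝ)+p) - t) * t * Δ / ((t:ℝ)+p) ^ 2)) := by
  by_cases hμ : μ = 0
  · rw [hμ]; simp only [norm_zero]; positivity
  set M : Matrix (Fin t ⊕ Fin p) (Fin t ⊕ Fin p) ℂ := fromBlocks (μ • 1) C 0 D with hM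
  set m : ℝ := ‖μ‖^2 with hm
  set cc : ℝ := ‖C‖^2 with hcc
  set dd : ℝ := ‖D‖^2 with hdd
  have hm0 : 0 ≤ m := sq_nonneg _
  have hcc0 : 0 ≤ cc := sq_nonneg _
  have hdd0 : 0 ≤ dd := sq_nonneg _
  -- trace facts
  have htrD : D.trace = -(t:ℂ) * μ := by
    rw [trace_fromBlocks', Matrix.trace_smul, Matrix.trace_one] at htr
    simp only [Fintype.card_fin, smul_eq_mul] at htr
    linear_combination htr
  -- p positive
  have hppos : 0 < p := by
    rcases Nat.eq_zero_or_pos p with h | h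
    · exfalso
      subst h
      have : D.trace = 0 := by
        simp [Matrix.trace]
      rw [this] at htrD
      have : (t:ℂ) * μ = 0 := by linear_combination htrD
      rcases mul_eq_zero.mp this with h' | h'
      · exact htpos.ne' (by exact_mod_cast h')
      · exact hμ h'
    · exact h
  have hpR : (0:ℝ) < p := by exact_mod_cast hppos
  have htR : (0:ℝ) < t := by exact_mod_cast htpos
  -- q decomposition
  have hμμ : μ * star μ = ((m:ℝ) : ℂ) := by
    rw [Complex.star_def, Complex.mul_conj, hm]
    norm_cast
    rw [Complex.normSq_eq_norm_sq]
  have hqd : q = t * m + cc + dd := by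
    rw [hq, frob_sq_fromBlocks, frob_sq_smul_one]
    simp [Fintype.card_fin, hm, hcc, hdd]
  -- Cauchy–Schwarz on the trace of D
  have hcs : (t:ℝ)^2 * m ≤ p * dd := by
    have htr1 : D.trace = ∑ i, D i i := rfl
    have h1 : ‖D.trace‖ ≤ ∑ i, ‖D i i‖ := by
      rw [htr1]; exact norm_sum_le _ _
    have h2 : (∑ i, ‖D i i‖)^2 ≤ (p:ℝ) * ∑ i, ‖D i i‖^2 := by
      simpa using sq_sum_le_card_mul_sum_sq (s := (Finset.univ : Finset (Fin p)))
        (f := fun i => ‖D i i‖)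
    have h3 : ∑ i, ‖D i i‖^2 ≤ dd := by
      rw [hdd, frob_sq]
      refine Finset.sum_le_sum fun i _ => ?_
      exact Finset.single_le_sum (f := fun j => ‖D i j‖^2) (fun j _ => sq_nonneg _)
        (Finset.mem_univ i)
    have h4 : ‖D.trace‖^2 = (t:ℝ)^2 * m := by
      rw [htrD, hm]
      simp [norm_mul, mul_pow]
    have h5 : ‖D.trace‖^2 ≤ (∑ i, ‖D i i‖)^2 :=
      pow_le_pow_left₀ (norm_nonneg _) h1 2
    nlinarith
  set δ : ℝ := dd - t^2 * m / p with hδ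
  have hδ0 : 0 ≤ δ := by
    rw [hδ]
    rw [sub_nonneg, div_le_iff₀ hpR]
    linarith [hcs]
  -- block form of M * Mᴴ
  have hMMH : M * Mᴴ = fromBlocks (((m:ℝ):ℂ) • 1 + C * Cᴴ) (C * Dᴴ) (D * Cᴴ) (D * Dᴴ) := by
    rw [hM, Matrix.fromBlocks_conjTranspose, Matrix.fromBlocks_multiply]
    rw [Matrix.conjTranspose_smul, Matrix.conjTranspose_one, Matrix.conjTranspose_zero]
    refine Matrix.fromBlocks_inj.mpr ⟨?_, ?_, ?_, ?_⟩
    · rw [Matrix.smul_mul, Matrix.mul_smul, Matrix.one_mul, smul_smul, hμμ]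
    · rw [Matrix.mul_zero, zero_add]
    · rw [Matrix.zero_mul, zero_add]
    · rw [Matrix.zero_mul, zero_add]
  have hM2 : M * M = fromBlocks ((μ*μ) • 1) (μ • C + C * D) 0 (D * D) := by
    rw [hM, Matrix.fromBlocks_multiply]
    refine Matrix.fromBlocks_inj.mpr ⟨?_, ?_, ?_, ?_⟩
    · rw [Matrix.mul_zero, add_zero, Matrix.smul_mul, Matrix.mul_smul, Matrix.one_mul, smul_smul]
    · rw [Matrix.smul_mul, Matrix.one_mul]
    · rw [Matrix.zero_mul, Matrix.mul_zero, add_zero]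
    · rw [Matrix.zero_mul, zero_add]
  -- top-left norm expansion
  have hTL : ‖((m:ℝ):ℂ) • (1 : Matrix (Fin t) (Fin t) ℂ) + C * Cᴴ‖^2
      = t * m^2 + 2*m*cc + ‖C * Cᴴ‖^2 := by
    set P := C * Cᴴ with hP
    have hPh : Pᴴ = P := by rw [hP, Matrix.conjTranspose_mul, Matrix.conjTranspose_conjTranspose]
    have hXh : (((m:ℝ):ℂ) • (1 : Matrix (Fin t) (Fin t) ℂ) + P)ᴴ
        = ((m:ℝ):ℂ) • (1 : Matrix (Fin t) (Fin t) ℂ) + P := by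
      rw [Matrix.conjTranspose_add, Matrix.conjTranspose_smul, Matrix.conjTranspose_one, hPh]
      congr 1
      rw [Complex.star_def, Complex.conj_ofReal]
    have h1 := trace_mul_conjTranspose_self (((m:ℝ):ℂ) • (1 : Matrix (Fin t) (Fin t) ℂ) + P)
    rw [hXh] at h1
    have h2 : (((m:ℝ):ℂ) • (1 : Matrix (Fin t) (Fin t) ℂ) + P)
          * (((m:ℝ):ℂ) • (1 : Matrix (Fin t) (Fin t) ℂ) + P)
        = (((m*m : ℝ)):ℂ) • (1 : Matrix (Fin t) (Fin t) ℂ)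
          + (((2*m : ℝ)):ℂ) • P + P * P := by
      rw [Matrix.add_mul, Matrix.mul_add, Matrix.mul_add]
      simp only [Matrix.smul_mul, Matrix.mul_smul, Matrix.one_mul, Matrix.mul_one, smul_smul]
      rw [show (((m:ℝ):ℂ)) * ((m:ℝ):ℂ) = ((m*m : ℝ) : ℂ) by push_cast; ring]
      rw [show (((2*m : ℝ)):ℂ) • P = ((m:ℝ):ℂ) • P + ((m:ℝ):ℂ) • P by
        rw [← add_smul]; congr 1; push_cast; ring]
      abel
    rw [h2] at h1
    rw [Matrix.trace_add, Matrix.trace_add, Matrix.trace_smul, Matrix.trace_smul,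
      Matrix.trace_one] at h1
    have hPtr : P.trace = ((cc:ℝ) : ℂ) := trace_mul_conjTranspose_self C
    have hPP : (P * P).trace = ((‖P‖^2 : ℝ) : ℂ) := by
      conv_lhs => rw [show P * P = P * Pᴴ by rw [hPh]]
      exact trace_mul_conjTranspose_self P
    rw [hPtr, hPP, Fintype.card_fin] at h1
    have : ((((t:ℝ) * m^2 + 2*m*cc + ‖P‖^2 : ℝ)) : ℂ)
        = ((m*m : ℝ):ℂ) • ((t:ℕ) : ℂ) + ((2*m:ℝ):ℂ) • ((cc:ℝ):ℂ) + ((‖P‖^2:ℝ):ℂ) := by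
      push_cast; simp [smul_eq_mul]; ring
    rw [← this] at h1
    exact_mod_cast h1.symm
  -- bound for the D commutator part
  have hDD : ‖D * Dᴴ‖^2 - ‖D * D‖^2 ≤ δ^2 := by
    set τ : ℂ := D.trace / p with hτ
    set D0 := D - τ • (1 : Matrix (Fin p) (Fin p) ℂ) with hD0
    have hshift := comm_shift D τ
    have hpC : ((p:ℕ):ℂ) ≠ 0 := Nat.cast_ne_zero.mpr hppos.ne'
    have hnd0 : ‖D0‖^2 = δ := by
      have h1 := norm_sub_smul_one_sq D τ
      have hstar : star τ = (-(t:ℂ) * star μ) / (p:ℂ) := by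
        rw [hτ, htrD, Complex.star_def, map_div₀]
        simp [Complex.star_def]
      have hstar2 : star D.trace = -(t:ℂ) * star μ := by
        rw [htrD]; simp [Complex.star_def]
      have hstar3 : star ((-(t:ℂ) * μ) / (p:ℂ)) = (-(t:ℂ) * star μ) / (p:ℂ) := by
        rw [Complex.star_def, map_div₀]; simp [Complex.star_def]
      have hw : τ * star τ = (((t:ℝ)^2 * m / p^2 : ℝ) : ℂ) := by
        calc τ * star τ = ((t:ℂ)^2 * (μ * star μ)) / ((p:ℂ) * p) := by
              rw [hτ, htrD, hstar3]; ring
        _ = (((t:ℝ)^2 * m / p^2 : ℝ) : ℂ) := by rw [hμμ]; push_cast; ring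
      have hw2 : star τ * D.trace = (((t:ℝ)^2 * m / p : ℝ) : ℂ) := by
        calc star τ * D.trace = ((t:ℂ)^2 * (μ * star μ)) / (p:ℂ) := by
              rw [hτ, htrD, hstar3]; ring
        _ = (((t:ℝ)^2 * m / p : ℝ) : ℂ) := by rw [hμμ]; push_cast; ring
      have hw3 : τ * star D.trace = (((t:ℝ)^2 * m / p : ℝ) : ℂ) := by
        calc τ * star D.trace = ((t:ℂ)^2 * (μ * star μ)) / (p:ℂ) := by
              rw [hτ, hstar2, htrD]; ring
        _ = (((t:ℝ)^2 * m / p : ℝ) : ℂ) := by rw [hμμ]; push_cast; ring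
      rw [hw, hw2, hw3, Fintype.card_fin] at h1
      have h2 : ((‖D0‖^2 : ℝ) : ℂ) = ((δ : ℝ) : ℂ) := by
        rw [h1, hδ, hdd]
        have hpR' : ((p:ℕ):ℝ) ≠ 0 := ne_of_gt hpR
        push_cast
        field_simp
        ring
      exact_mod_cast h2
    have h3 : ‖D * Dᴴ‖^2 - ‖D * D‖^2 = ‖D0 * D0ᴴ‖^2 - ‖D0 * D0‖^2 := by
      rw [← delta_eq D, ← delta_eq D0, ← hshift, hD0]
    have h4 : ‖D0 * D0ᴴ‖^2 ≤ δ^2 := by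
      calc ‖D0 * D0ᴴ‖^2 ≤ ‖D0‖^2 * ‖D0ᴴ‖^2 := frob_sq_mul_le _ _
      _ = δ^2 := by rw [Matrix.frobenius_norm_conjTranspose, hnd0]; ring
    nlinarith [sq_nonneg ‖D0 * D0‖]
  -- other norm bounds
  have hCC : ‖C * Cᴴ‖^2 ≤ cc^2 := by
    calc ‖C * Cᴴ‖^2 ≤ ‖C‖^2 * ‖Cᴴ‖^2 := frob_sq_mul_le _ _
    _ = cc^2 := by rw [Matrix.frobenius_norm_conjTranspose, hcc]; ring
  have hCD : ‖C * Dᴴ‖^2 ≤ cc * dd := by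
    calc ‖C * Dᴴ‖^2 ≤ ‖C‖^2 * ‖Dᴴ‖^2 := frob_sq_mul_le _ _
    _ = cc * dd := by rw [Matrix.frobenius_norm_conjTranspose]
  have hDC : ‖D * Cᴴ‖ = ‖C * Dᴴ‖ := by
    rw [show D * Cᴴ = (C * Dᴴ)ᴴ by
      rw [Matrix.conjTranspose_mul, Matrix.conjTranspose_conjTranspose]]
    exact Matrix.frobenius_norm_conjTranspose _
  -- Δ bound
  have hΔbound : Δ ≤ 2*m*cc + cc^2 + 2*cc*dd + δ^2 := by
    have hΔeq : Δ = ‖M * Mᴴ‖^2 - ‖M * M‖^2 := by rw [hΔ]; exact delta_eq M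
    have h5 : ‖M * Mᴴ‖^2 = (t * m^2 + 2*m*cc + ‖C * Cᴴ‖^2) + ‖C * Dᴴ‖^2 + ‖D * Cᴴ‖^2
        + ‖D * Dᴴ‖^2 := by
      rw [hMMH, frob_sq_fromBlocks, hTL]
    have h6 : ‖M * M‖^2 = ‖(μ*μ) • (1 : Matrix (Fin t) (Fin t) ℂ)‖^2 + ‖μ • C + C * D‖^2
        + ‖D * D‖^2 := by
      rw [hM2, frob_sq_fromBlocks]
      simp
    have h7 : ‖(μ*μ) • (1 : Matrix (Fin t) (Fin t) ℂ)‖^2 = t * m^2 := by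
      rw [frob_sq_smul_one, Fintype.card_fin, norm_mul, hm]
      ring
    rw [hΔeq, h5, h6, h7, hDC]
    have := sq_nonneg ‖μ • C + C * D‖
    linarith
  -- final arithmetic
  have ht1 : (1:ℝ) ≤ t := by exact_mod_cast htpos
  set nR : ℝ := (t:ℝ) + p with hnR
  have hnR0 : 0 < nR := by positivity
  set sR : ℝ := 2 * nR - t with hsR
  have hsval : sR = (t:ℝ) + 2*p := by rw [hsR, hnR]; ring
  have hs0 : 0 < sR := by rw [hsval]; positivity
  set e : ℝ := cc + δ with he
  have he0 : 0 ≤ e := add_nonneg hcc0 hδ0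
  clear_value δ nR sR e
  have hkey : Δ ≤ e^2 + 2*nR^2*m*e/p := by
    have h1 : (p:ℝ) + t^2 ≤ nR^2 := by
      have hprod : (0:ℝ) ≤ (p:ℝ)*(2*t-1) := mul_nonneg (le_of_lt hpR) (by linarith)
      rw [hnR]; nlinarith [hprod, sq_nonneg ((p:ℝ))]
    have expand : e^2 + 2*nR^2*m*e/p - (2*m*cc + cc^2 + 2*cc*dd + δ^2)
        = (2*(m/p)) * ((nR^2 - p - t^2) * cc + nR^2 * δ) := by
      rw [he, hδ]
      have hp' : ((p:ℕ):ℝ) ≠ 0 := ne_of_gt hpR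
      field_simp
      ring
    have pos : 0 ≤ (2*(m/p)) * ((nR^2 - p - t^2) * cc + nR^2 * δ) := by
      apply mul_nonneg (by positivity)
      exact add_nonneg (mul_nonneg (by linarith) hcc0) (mul_nonneg (sq_nonneg nR) hδ0)
    linarith [hΔbound, expand, pos]
  set R : ℝ := q^2 - sR*t*Δ/nR^2 with hR
  have hqx : q^2 - (sR*t*m/p - p*q/nR)^2 = sR*t*e^2/nR^2 + 2*sR*t*m*e/p := by
    rw [hqd, he, hδ, hsval, hnR]
    have hp' : ((p:ℕ):ℝ) ≠ 0 := ne_of_gt hpR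
    have hn' : ((t:ℝ) + p) ≠ 0 := by rw [← hnR]; exact ne_of_gt hnR0
    field_simp
    ring
  have hRX : (sR*t*m/p - p*q/nR)^2 ≤ R := by
    have h5 : sR*t*Δ/nR^2 ≤ sR*t*e^2/nR^2 + 2*sR*t*m*e/p := by
      have h6 : sR*t/nR^2 * Δ ≤ sR*t/nR^2 * (e^2 + 2*nR^2*m*e/p) :=
        mul_le_mul_of_nonneg_left hkey (by positivity)
      have h7 : sR*t/nR^2 * (e^2 + 2*nR^2*m*e/p) = sR*t*e^2/nR^2 + 2*sR*t*m*e/p := by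
        field_simp
      calc sR*t*Δ/nR^2 = sR*t/nR^2 * Δ := by ring
      _ ≤ _ := by rw [h7] at h6; exact h6
    rw [hR]
    linarith [hqx]
  have hsqle : sR*t*m/p - p*q/nR ≤ Real.sqrt R := by
    calc sR*t*m/p - p*q/nR ≤ |sR*t*m/p - p*q/nR| := le_abs_self _
    _ = Real.sqrt ((sR*t*m/p - p*q/nR)^2) := (Real.sqrt_sq_eq_abs _).symm
    _ ≤ Real.sqrt R := Real.sqrt_le_sqrt hRX
  have hfin : m ≤ (p/(sR*t)) * (p*q/nR + Real.sqrt R) := by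
    have h8 : sR*t*m/p ≤ p*q/nR + Real.sqrt R := by linarith
    have h9 : m = (p/(sR*t)) * (sR*t*m/p) := by field_simp
    rw [h9]
    exact mul_le_mul_of_nonneg_left h8 (by positivity)
  have hnorm : ‖μ‖ = Real.sqrt m := by rw [hm, Real.sqrt_sq (norm_nonneg μ)]
  rw [hnorm]
  have h4 : Real.sqrt m ≤ Real.sqrt ((p/(sR*t)) * (p*q/nR + Real.sqrt R)) :=
    Real.sqrt_le_sqrt hfin
  rw [Real.sqrt_mul (by positivity)] at h4
  exact h4

end EigBound

end

attribute [local instance] Matrix.frobeniusSeminormedAddCommGroup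

open EigBound in
theorem eigenvalue_bound_main (n t : ℕ) (A : Matrix (Fin n) (Fin n) ℂ) (lam : ℂ)
    (hlam : Module.End.HasEigenvalue (Matrix.toLin' A) lam)
    (ht : Module.finrank ℂ (Module.End.eigenspace (Matrix.toLin' A) lam) = t)
    (frobSq : Matrix (Fin n) (Fin n) ℂ → ℝ)
    (hfrob : ∀ B, frobSq B = ∑ i, ∑ j, ‖B i j‖ ^ 2)
    (q Δ : ℝ)
    (hq : q = frobSq A - ‖A.trace‖ ^ 2 / n)
    (hΔ : Δ = frobSq (A * Aᴴ - Aᴴ * A) / 2) :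
    ‖lam - A.trace / n‖ ≤
      Real.sqrt (((n : ℝ) - t) / ((2 * (n : ℝ) - t) * t)) *
        Real.sqrt (((n : ℝ) - t) * q / n +
          Real.sqrt (q ^ 2 - (2 * (n : ℝ) - t) * t * Δ / n ^ 2)) := by
  classical
  set S := Module.End.eigenspace (Matrix.toLin' A) lam with hS
  have htpos : 0 < t := by
    rw [← ht]
    by_contra h
    push_neg at h
    interval_cases ha : (Module.finrank ℂ S)
    · exact hlam (Submodule.finrank_eq_zero.mp ha)
  have htn : t ≤ n := by
    rw [← ht]
    have h1 := Submodule.finrank_le S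
    simpa [Module.finrank_pi] using h1
  set p := n - t with hp
  have hnp : t + p = n := by omega
  -- move the eigenspace to EuclideanSpace
  set L : EuclideanSpace ℂ (Fin n) ≃ₗ[ℂ] (Fin n → ℂ) := WithLp.linearEquiv 2 ℂ (Fin n → ℂ)
    with hL
  set S' : Submodule ℂ (EuclideanSpace ℂ (Fin n)) := S.comap L.toLinearMap with hS'
  have hrank' : Module.finrank ℂ S' = t := by
    rw [hS', Submodule.comap_equiv_eq_map_symm, LinearEquiv.finrank_map_eq]
    exact ht
  set b0 := stdOrthonormalBasis ℂ S' with hb0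
  set w : Fin t → EuclideanSpace ℂ (Fin n) :=
    fun i => ((b0 ((finCongr hrank'.symm) i)) : EuclideanSpace ℂ (Fin n)) with hw
  have hw_mem : ∀ i, L (w i) ∈ S := by
    intro i
    have h2 : (b0 ((finCongr hrank'.symm) i) : EuclideanSpace ℂ (Fin n)) ∈ S' :=
      (b0 ((finCongr hrank'.symm) i)).2
    exact Submodule.mem_comap.mp h2
  have hw_on : Orthonormal ℂ w := by
    have h0 := b0.orthonormal
    rw [orthonormal_iff_ite] at h0 ⊢
    intro i j
    rw [hw]
    simp only
    rw [← Submodule.coe_inner]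
    rw [h0]
    congr 1
    simp [Fin.ext_iff]
  set v : Fin n → EuclideanSpace ℂ (Fin n) :=
    fun j => if h : (j:ℕ) < t then w ⟨j, h⟩ else 0 with hv
  have hvon : Orthonormal ℂ (Set.restrict {j : Fin n | (j:ℕ) < t} v) := by
    have hres : ∀ (x : {j : Fin n | (j:ℕ) < t}),
        Set.restrict {j : Fin n | (j:ℕ) < t} v x = w ⟨(x:Fin n), x.2⟩ := by
      intro x
      simp only [Set.restrict_apply, hv]
      exact dif_pos x.2
    rw [orthonormal_iff_ite] at hw_on ⊢
    intro i j
    rw [hres i, hres j, hw_on]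
    congr 1
    simp only [Fin.mk.injEq, eq_iff_iff]
    constructor
    · intro h'
      exact Subtype.ext (Fin.ext h')
    · intro h'
      rw [h']
  obtain ⟨b, hb⟩ := hvon.exists_orthonormalBasis_extension_of_card_eq
    (by simp [finrank_euclideanSpace])
  -- the unitary matrix whose columns are the basis vectors
  set U : Matrix (Fin n) (Fin n) ℂ := Matrix.of (fun i j => (b j) i) with hU_def
  have hUcol : ∀ i j, U i j = (b j) i := fun i j => rfl
  have hUU : Uᴴ * U = 1 := by
    ext i j
    rw [Matrix.mul_apply, Matrix.one_apply]
    have h0 := orthonormal_iff_ite.mp b.orthonormal i j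
    rw [PiLp.inner_apply] at h0
    simp only [RCLike.inner_apply] at h0
    simpa [Matrix.conjTranspose_apply, hUcol, mul_comm] using h0
  have hUU' : U * Uᴴ = 1 := mul_eq_one_comm.mp hUU
  -- eigen condition for the first t columns
  have hbi : ∀ i : Fin n, (i:ℕ) < t → A.mulVec (L (b i)) = lam • (L (b i)) := by
    intro i hi
    have h3 : b i = v i := hb i hi
    have h4 : v i = w ⟨i, hi⟩ := dif_pos hi
    have h5 := hw_mem ⟨i, hi⟩
    rw [hS, Module.End.mem_eigenspace_iff, Matrix.toLin'_apply] at h5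
    rw [h3, h4]
    exact h5
  set c : ℂ := A.trace / n with hc
  set μ : ℂ := lam - c with hμdef
  set B : Matrix (Fin n) (Fin n) ℂ := A - c • 1 with hB
  set N : Matrix (Fin n) (Fin n) ℂ := Uᴴ * B * U with hN
  have hnn : 0 < n := lt_of_lt_of_le htpos htn
  have hnC : ((n:ℕ):ℂ) ≠ 0 := Nat.cast_ne_zero.mpr hnn.ne'
  have hBU : ∀ i : Fin n, (i:ℕ) < t → ∀ k', (B * U) k' i = μ * U k' i := by
    intro i hi k'
    have hmv := hbi i hi
    have h6 : (B * U) k' i = (B.mulVec (L (b i))) k' := by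
      rw [Matrix.mul_apply]
      rfl
    rw [h6, hB, Matrix.sub_mulVec, Matrix.smul_mulVec, Matrix.one_mulVec, hmv]
    show lam * (b i) k' - c * (b i) k' = μ * (b i) k'
    rw [hμdef]
    ring
  have hNcol : ∀ i : Fin n, (i:ℕ) < t → ∀ j, N j i = if j = i then μ else 0 := by
    intro i hi j
    rw [hN, Matrix.mul_assoc, Matrix.mul_apply]
    have h7 : ∀ k', (B * U) k' i = μ * U k' i := hBU i hi
    calc ∑ k', Uᴴ j k' * (B*U) k' i = ∑ k', star (U k' j) * (μ * U k' i) := by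
          refine Finset.sum_congr rfl fun k' _ => ?_
          rw [Matrix.conjTranspose_apply, h7]
    _ = μ * ∑ k', star (U k' j) * U k' i := by
          rw [Finset.mul_sum]
          exact Finset.sum_congr rfl fun k' _ => by ring
    _ = μ * ((Uᴴ * U) j i) := by
          simp [Matrix.mul_apply, Matrix.conjTranspose_apply]
    _ = if j = i then μ else 0 := by
          rw [hUU, Matrix.one_apply]
          split <;> simp
  -- transfers
  have hfrob' : ∀ X : Matrix (Fin n) (Fin n) ℂ, frobSq X = ‖X‖^2 := by
    intro X
    rw [hfrob, frob_sq]
  have hBtr : B.trace = 0 := by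
    rw [hB, Matrix.trace_sub, Matrix.trace_smul, Matrix.trace_one, hc]
    simp only [smul_eq_mul, Fintype.card_fin]
    field_simp
    ring
  have hNtr : N.trace = 0 := by
    rw [hN, Matrix.trace_mul_comm, ← Matrix.mul_assoc, hUU', Matrix.one_mul, hBtr]
  have hstarc : star c = star A.trace / ((n:ℕ):ℂ) := by
    rw [hc, Complex.star_def, map_div₀]
    simp
  have hBnorm : ‖B‖^2 = ‖A‖^2 - ‖A.trace‖^2 / n := by
    have h1 := norm_sub_smul_one_sq A c
    rw [← hB] at h1
    have hca : star c * A.trace = ((‖A.trace‖^2 / n : ℝ) : ℂ) := by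
      rw [hstarc, div_mul_eq_mul_div, star_mul_self']
      push_cast; ring
    have hac : c * star A.trace = ((‖A.trace‖^2 / n : ℝ) : ℂ) := by
      rw [hc, div_mul_eq_mul_div]
      rw [show A.trace * star A.trace = ((‖A.trace‖^2 : ℝ) : ℂ) from mul_star_self' _]
      push_cast; ring
    have hcc2 : c * star c = ((‖A.trace‖^2 / n^2 : ℝ) : ℂ) := by
      rw [hc, hstarc, div_mul_div_comm, mul_star_self']
      push_cast; ring
    rw [hca, hac, hcc2, Fintype.card_fin] at h1
    have hnR : ((n:ℕ):ℝ) ≠ 0 := Nat.cast_ne_zero.mpr hnn.ne'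
    have h2 : ((‖B‖^2 : ℝ) : ℂ) = ((‖A‖^2 - ‖A.trace‖^2 / n : ℝ) : ℂ) := by
      rw [h1]
      push_cast
      field_simp
      ring
    exact_mod_cast h2
  have hqN : q = ‖N‖^2 := by
    rw [hq, hfrob' A, hN, conj_unitary_frob hUU' B, hBnorm]
  have hKBA : B * Bᴴ - Bᴴ * B = A * Aᴴ - Aᴴ * A := by
    rw [hB]; exact comm_shift A c
  have hKN : N * Nᴴ - Nᴴ * N = Uᴴ * (A * Aᴴ - Aᴴ * A) * U := by
    rw [hN]
    have hNH : (Uᴴ * B * U)ᴴ = Uᴴ * Bᴴ * U := by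
      rw [Matrix.conjTranspose_mul, Matrix.conjTranspose_mul, Matrix.conjTranspose_conjTranspose,
        Matrix.mul_assoc]
    rw [hNH]
    calc Uᴴ*B*U*(Uᴴ*Bᴴ*U) - Uᴴ*Bᴴ*U*(Uᴴ*B*U)
        = Uᴴ*B*(U*Uᴴ)*(Bᴴ*U) - Uᴴ*Bᴴ*(U*Uᴴ)*(B*U) := by noncomm_ring
    _ = Uᴴ*(B*Bᴴ - Bᴴ*B)*U := by rw [hUU']; noncomm_ring
    _ = _ := by rw [hKBA]
  have hΔN : Δ = ‖N * Nᴴ - Nᴴ * N‖^2/2 := by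
    rw [hΔ, hfrob', hKN, conj_unitary_frob hUU']
  -- reindex into blocks
  set eqv : Fin t ⊕ Fin p ≃ Fin n := finSumFinEquiv.trans (finCongr hnp) with heqv
  have heqvl : ∀ i : Fin t, ((eqv (Sum.inl i) : Fin n) : ℕ) = (i:ℕ) := by
    intro i
    simp [heqv, finSumFinEquiv_apply_left]
  set M' := N.submatrix eqv eqv with hM'def
  set CC := M'.toBlocks₁₂ with hCCdef
  set DD := M'.toBlocks₂₂ with hDDdef
  have hM' : M' = fromBlocks (μ • 1) CC 0 DD := by
    rw [← Matrix.fromBlocks_toBlocks M', hCCdef, hDDdef]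
    refine Matrix.fromBlocks_inj.mpr ⟨?_, rfl, ?_, rfl⟩
    · ext i j
      have hcol := hNcol (eqv (Sum.inl j)) (by rw [heqvl]; exact j.2) (eqv (Sum.inl i))
      show N (eqv (Sum.inl i)) (eqv (Sum.inl j)) = (μ • (1 : Matrix (Fin t) (Fin t) ℂ)) i j
      rw [hcol]
      simp [Matrix.smul_apply, Matrix.one_apply, EmbeddingLike.apply_eq_iff_eq]
    · ext i j
      have hcol := hNcol (eqv (Sum.inl j)) (by rw [heqvl]; exact j.2) (eqv (Sum.inr i))
      show N (eqv (Sum.inr i)) (eqv (Sum.inl j)) = (0 : Matrix (Fin p) (Fin t) ℂ) i j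
      rw [hcol]
      simp [EmbeddingLike.apply_eq_iff_eq]
  have htrM' : (fromBlocks (μ • 1) CC 0 DD : Matrix (Fin t ⊕ Fin p) (Fin t ⊕ Fin p) ℂ).trace
      = 0 := by
    rw [← hM', hM'def, trace_submatrix', hNtr]
  have hqM' : q = ‖(fromBlocks (μ • 1) CC 0 DD :
      Matrix (Fin t ⊕ Fin p) (Fin t ⊕ Fin p) ℂ)‖^2 := by
    rw [← hM', hM'def, frob_sq_submatrix]
    exact hqN
  have hΔM' : Δ = ‖(fromBlocks (μ • 1) CC 0 DD) * (fromBlocks (μ • 1) CC 0 DD)ᴴ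
      - (fromBlocks (μ • 1) CC 0 DD)ᴴ * (fromBlocks (μ • 1) CC 0 DD :
        Matrix (Fin t ⊕ Fin p) (Fin t ⊕ Fin p) ℂ)‖^2 / 2 := by
    rw [← hM', hM'def]
    have hsub : (N.submatrix eqv eqv) * (N.submatrix eqv eqv)ᴴ
        - (N.submatrix eqv eqv)ᴴ * (N.submatrix eqv eqv)
        = (N * Nᴴ - Nᴴ * N).submatrix eqv eqv := by
      rw [Matrix.conjTranspose_submatrix, Matrix.submatrix_mul_equiv,
        Matrix.submatrix_mul_equiv]
      ext i j
      simp [Matrix.submatrix_apply, Matrix.sub_apply]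
    rw [hsub, frob_sq_submatrix]
    exact hΔN
  have hcore := core t p htpos μ CC DD htrM' q Δ hqM' hΔM'
  have hc1 : ((n:ℝ)) = (t:ℝ) + p := by exact_mod_cast hnp.symm
  have hc2 : ((n:ℝ)) - t = (p:ℝ) := by rw [hc1]; ring
  have hlhs : ‖lam - A.trace / n‖ = ‖μ‖ := by
    rw [hμdef, hc]
  rw [hlhs, hc2, hc1]
  exact hcore
end

section
/- Let A be a normal n×n complex matrix (AA* = A*A) and λ an eigenvalue of A with geometric multiplicity t. Then |λ − tr(A)/n| ≤ √((n−t)/(nt) · q_A), where q_A = ‖A‖² − |tr(A)|²/n and ‖·‖ is the Frobenius norm. -/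
open Matrix Finset

noncomputable section

private lemma parseval' {E : Type*} [NormedAddCommGroup E] [InnerProductSpace ℂ E]
    {ι : Type*} [Fintype ι] (b : OrthonormalBasis ι ℂ E) (x : E) :
    ∑ i, ‖(inner ℂ (b i) x : ℂ)‖ ^ 2 = ‖x‖ ^ 2 := by
  have h := b.sum_inner_mul_inner x x
  have h2 : ∀ i, (inner ℂ x (b i) : ℂ) * inner ℂ (b i) x
      = ((‖(inner ℂ (b i) x : ℂ)‖ ^ 2 : ℝ) : ℂ) := by
    intro i
    rw [← inner_conj_symm (b i) x, Complex.sq_norm, Complex.normSq_eq_conj_mul_self]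
    rw [Complex.conj_conj]
  rw [Finset.sum_congr rfl (fun i _ => h2 i)] at h
  have h3 : (inner ℂ x x : ℂ) = ((‖x‖ ^ 2 : ℝ) : ℂ) := by
    rw [inner_self_eq_norm_sq_to_K]; norm_cast
  rw [h3, ← Complex.ofReal_sum] at h
  exact_mod_cast h

private lemma abs_inner_symm' {E : Type*} [NormedAddCommGroup E] [InnerProductSpace ℂ E]
    (x y : E) : ‖(inner ℂ x y : ℂ)‖ = ‖(inner ℂ y x : ℂ)‖ := by
  rw [← inner_conj_symm y x, Complex.norm_conj]

private lemma frob_invariance {E : Type*} [NormedAddCommGroup E] [InnerProductSpace ℂ E]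
    [FiniteDimensional ℂ E] {ι κ : Type*} [Fintype ι] [Fintype κ]
    (T : E →ₗ[ℂ] E) (b : OrthonormalBasis ι ℂ E) (c : OrthonormalBasis κ ℂ E) :
    ∑ j, ‖T (b j)‖ ^ 2 = ∑ i, ‖(LinearMap.adjoint T) (c i)‖ ^ 2 := by
  have h1 : ∀ j, ‖T (b j)‖^2 = ∑ i, ‖(inner ℂ (c i) (T (b j)) : ℂ)‖^2 :=
    fun j => (parseval' c (T (b j))).symm
  have h2 : ∀ i, ‖(LinearMap.adjoint T) (c i)‖^2
      = ∑ j, ‖(inner ℂ (b j) ((LinearMap.adjoint T) (c i)) : ℂ)‖^2 :=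
    fun i => (parseval' b _).symm
  simp_rw [h1, h2]
  rw [Finset.sum_comm]
  refine Finset.sum_congr rfl fun i _ => Finset.sum_congr rfl fun j _ => ?_
  rw [abs_inner_symm' (b j), LinearMap.adjoint_inner_left]

private lemma sum_inner_eq_trace {E : Type*} [NormedAddCommGroup E] [InnerProductSpace ℂ E]
    [FiniteDimensional ℂ E] {ι : Type*} [Fintype ι] [DecidableEq ι]
    (T : E →ₗ[ℂ] E) (b : OrthonormalBasis ι ℂ E) :
    ∑ i, (inner ℂ (b i) (T (b i)) : ℂ) = LinearMap.trace ℂ E T := by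
  rw [LinearMap.trace_eq_matrix_trace ℂ b.toBasis T, Matrix.trace]
  refine Finset.sum_congr rfl fun i _ => ?_
  rw [Matrix.diag_apply, LinearMap.toMatrix_apply, OrthonormalBasis.coe_toBasis_repr_apply,
    OrthonormalBasis.repr_apply_apply, OrthonormalBasis.coe_toBasis]

private lemma scalar_bound {n t : ℕ} (ht1 : 0 < t) (htn : t ≤ n) (d : Fin n → ℂ) (δ : ℂ)
    (hsum : ∑ i, d i = 0)
    (hδ : ∀ i : Fin n, (i : ℕ) < t → d i = δ)
    (q : ℝ) (hq : ∑ i, ‖d i‖ ^ 2 ≤ q) :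
    ‖δ‖ ≤ Real.sqrt (((n : ℝ) - t) / ((n : ℝ) * t) * q) := by
  classical
  set s : Finset (Fin n) := Finset.univ.filter (fun i => (i : ℕ) < t) with hs
  have hmem : ∀ i : Fin n, i ∈ s ↔ (i : ℕ) < t := by intro i; simp [hs]
  have hcard : s.card = t := by
    rw [← Fintype.card_fin t, ← Finset.card_univ]
    apply Finset.card_bij' (fun (i : Fin n) (hi : i ∈ s) => (⟨(i : ℕ), (hmem i).mp hi⟩ : Fin t))
      (fun (j : Fin t) (_ : j ∈ univ) => (⟨(j : ℕ), lt_of_lt_of_le j.2 htn⟩ : Fin n))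
    · intro a ha; exact Finset.mem_univ _
    · intro a ha; simp [hmem]
    · intro a ha; rfl
    · intro a ha; exact (hmem _).mpr a.2
  have hcardc : sᶜ.card = n - t := by
    rw [Finset.card_compl, hcard, Fintype.card_fin]
  set x := ‖δ‖ with hx
  have hx0 : 0 ≤ x := norm_nonneg δ
  have hN : (t : ℝ) ≤ (n : ℝ) := by exact_mod_cast htn
  have hT : (1 : ℝ) ≤ (t : ℝ) := by exact_mod_cast ht1
  have hss : ∑ i ∈ s, d i = (t : ℂ) * δ := by
    rw [Finset.sum_congr rfl (fun i hi => hδ i ((hmem i).mp hi)), Finset.sum_const, hcard]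
    simp [nsmul_eq_mul]
  have hssq : ∑ i ∈ s, ‖d i‖ ^ 2 = (t : ℝ) * x ^ 2 := by
    rw [Finset.sum_congr rfl (fun i hi => by rw [hδ i ((hmem i).mp hi)]), Finset.sum_const, hcard]
    simp [nsmul_eq_mul, hx]
  have hcompl : ∑ i ∈ sᶜ, d i = -((t : ℂ) * δ) := by
    have := Finset.sum_add_sum_compl s d
    rw [hsum, hss] at this
    linear_combination this
  have hAq : ∑ i ∈ sᶜ, ‖d i‖ ^ 2 ≤ q - (t : ℝ) * x ^ 2 := by
    have := Finset.sum_add_sum_compl s (fun i => ‖d i‖ ^ 2)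
    rw [hssq] at this
    linarith [hq, this.ge, this.le]
  have hcs : ((t : ℝ) * x) ^ 2 ≤ ((n : ℝ) - t) * (q - (t : ℝ) * x ^ 2) := by
    have h1 : ‖∑ i ∈ sᶜ, d i‖ ≤ ∑ i ∈ sᶜ, ‖d i‖ :=
      norm_sum_le _ _
    have h2 : (∑ i ∈ sᶜ, ‖d i‖) ^ 2
        ≤ (sᶜ.card : ℝ) * ∑ i ∈ sᶜ, ‖d i‖ ^ 2 := by
      exact_mod_cast sq_sum_le_card_mul_sum_sq (s := sᶜ) (f := fun i => ‖d i‖)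
    have h3 : ‖∑ i ∈ sᶜ, d i‖ = (t : ℝ) * x := by
      rw [hcompl, norm_neg, norm_mul, Complex.norm_natCast, hx]
    have h4 : (sᶜ.card : ℝ) = (n : ℝ) - t := by
      rw [hcardc]; push_cast [Nat.cast_sub htn]; ring
    have h5 : ((t:ℝ) * x) ^ 2 ≤ (∑ i ∈ sᶜ, ‖d i‖) ^ 2 := by
      rw [← h3]; exact pow_le_pow_left₀ (norm_nonneg _) h1 2
    calc ((t:ℝ)*x)^2 ≤ (sᶜ.card : ℝ) * ∑ i ∈ sᶜ, ‖d i‖ ^ 2 := h5.trans h2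
      _ ≤ ((n : ℝ) - t) * (q - (t : ℝ) * x ^ 2) := by
          rw [h4]; exact mul_le_mul_of_nonneg_left hAq (by linarith)
  apply Real.le_sqrt_of_sq_le
  rw [div_mul_eq_mul_div, le_div_iff₀ (by nlinarith)]
  nlinarith [hcs, sq_nonneg x]

theorem eigenvalue_bound_normal (n t : ℕ) (A : Matrix (Fin n) (Fin n) ℂ)
    (hA : A * Aᴴ = Aᴴ * A) (lam : ℂ)
    (hlam : Module.End.HasEigenvalue (Matrix.toLin' A) lam)
    (ht : Module.finrank ℂ (Module.End.eigenspace (Matrix.toLin' A) lam) = t)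
    (frobSq : Matrix (Fin n) (Fin n) ℂ → ℝ)
    (hfrob : ∀ B, frobSq B = ∑ i, ∑ j, ‖B i j‖ ^ 2)
    (q : ℝ) (hq : q = frobSq A - ‖A.trace‖ ^ 2 / n) :
    ‖lam - A.trace / n‖ ≤
      Real.sqrt (((n : ℝ) - t) / ((n : ℝ) * t) * q) := by
  classical
  set T : EuclideanSpace ℂ (Fin n) →ₗ[ℂ] EuclideanSpace ℂ (Fin n) := Matrix.toEuclideanLin A
    with hT
  set S : Submodule ℂ (EuclideanSpace ℂ (Fin n)) :=
    (Module.End.eigenspace (Matrix.toLin' A) lam).map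
      ((WithLp.linearEquiv 2 ℂ (Fin n → ℂ)).symm : (Fin n → ℂ) →ₗ[ℂ] EuclideanSpace ℂ (Fin n))
    with hS
  have hSrank : Module.finrank ℂ S = t := (LinearEquiv.finrank_map_eq _ _).trans ht
  have ht1 : 0 < t := by
    rw [← hSrank]
    rw [Module.finrank_pos_iff]
    exact Submodule.nontrivial_iff_ne_bot.mpr (fun h => hlam (Submodule.map_eq_bot_iff.mp h))
  have htn : t ≤ n := by
    rw [← hSrank]
    have h := Submodule.finrank_le S
    rwa [finrank_euclideanSpace_fin] at h
  have hn0 : (0:ℕ) < n := lt_of_lt_of_le ht1 htn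
  -- orthonormal basis of S extended to the whole space
  let v0 : OrthonormalBasis (Fin t) ℂ S := (stdOrthonormalBasis ℂ S).reindex (finCongr hSrank)
  have hw : Orthonormal ℂ (fun j : Fin t => (v0 j : EuclideanSpace ℂ (Fin n))) :=
    v0.orthonormal.comp_linearIsometry S.subtypeₗᵢ
  let v : Fin n → EuclideanSpace ℂ (Fin n) :=
    fun i => if h : (i : ℕ) < t then (v0 ⟨i, h⟩ : EuclideanSpace ℂ (Fin n)) else 0
  set sset : Set (Fin n) := {i : Fin n | (i : ℕ) < t} with hsset
  have hrestrict : Orthonormal ℂ (sset.restrict v) := by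
    have hinj : Function.Injective (fun i : sset => (⟨(i : Fin n), i.2⟩ : Fin t)) := by
      intro a b hab
      simp only [Fin.mk.injEq] at hab
      exact Subtype.ext (Fin.ext hab)
    have := hw.comp _ hinj
    convert this using 1
    funext i
    simp only [Set.restrict_apply, Function.comp_apply, v]
    exact dif_pos i.2
  have hcardE : Module.finrank ℂ (EuclideanSpace ℂ (Fin n)) = Fintype.card (Fin n) := by
    rw [finrank_euclideanSpace_fin, Fintype.card_fin]
  obtain ⟨b, hb⟩ := hrestrict.exists_orthonormalBasis_extension_of_card_eq hcardE
  have hbS : ∀ i : Fin n, (i : ℕ) < t → b i ∈ S := by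
    intro i hi
    rw [hb i hi]
    simp only [v, dif_pos hi]
    exact (v0 ⟨i, hi⟩).2
  have hbeig : ∀ i : Fin n, (i : ℕ) < t → T (b i) = lam • b i := by
    intro i hi
    obtain ⟨y, hy, hyb⟩ := hbS i hi
    have hy' := Module.End.mem_eigenspace_iff.mp hy
    rw [← hyb]
    change T (WithLp.toLp 2 y) = lam • WithLp.toLp 2 y
    rw [hT, Matrix.toEuclideanLin_toLp, hy']
    rfl
  -- diagonal entries
  set c : Fin n → ℂ := fun i => (inner ℂ (b i) (T (b i)) : ℂ) with hc
  have hct : ∀ i : Fin n, (i : ℕ) < t → c i = lam := by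
    intro i hi
    have h1 : (inner ℂ (b i) (b i) : ℂ) = 1 := by
      rw [inner_self_eq_norm_sq_to_K, b.orthonormal.1 i]; norm_num
    rw [hc]
    simp only [hbeig i hi, inner_smul_right, h1, mul_one]
  -- standard basis
  set e : OrthonormalBasis (Fin n) ℂ (EuclideanSpace ℂ (Fin n)) :=
    EuclideanSpace.basisFun (Fin n) ℂ with he
  have hein : ∀ (x : EuclideanSpace ℂ (Fin n)) (i : Fin n), (inner ℂ (e i) x : ℂ) = x i := by
    intro x i
    rw [← OrthonormalBasis.repr_apply_apply]
    rfl
  have hTe : ∀ i j : Fin n, (T (e j)) i = A i j := by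
    intro i j
    have h1 : (T (e j)) i = ∑ k, A i k * (e j) k := rfl
    have h2 : ∀ k, (e j) k = if k = j then (1:ℂ) else 0 := by
      intro k
      rw [he]
      rw [show ((EuclideanSpace.basisFun (Fin n) ℂ) j) k = (EuclideanSpace.single j (1:ℂ)) k by
        rw [EuclideanSpace.basisFun_apply], EuclideanSpace.single_apply]
    rw [h1, Finset.sum_congr rfl (fun k _ => by rw [h2 k])]
    simp
  -- trace
  have htr : ∑ i, c i = A.trace := by
    rw [hc]
    rw [sum_inner_eq_trace T b, ← sum_inner_eq_trace T e]
    rw [Finset.sum_congr rfl fun i _ => hein (T (e i)) i]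
    rw [Finset.sum_congr rfl fun i _ => hTe i i]
    rfl
  -- Frobenius bound
  have hfrobE : frobSq A = ∑ j, ‖T (e j)‖ ^ 2 := by
    rw [hfrob A, Finset.sum_comm]
    refine Finset.sum_congr rfl fun j _ => ?_
    rw [← parseval' e (T (e j))]
    refine Finset.sum_congr rfl fun i _ => ?_
    rw [hein (T (e j)) i, hTe i j]
  have hbb : ∑ j, ‖T (b j)‖ ^ 2 = ∑ j, ‖T (e j)‖ ^ 2 := by
    rw [frob_invariance T b e, frob_invariance T e e]
  have hc2 : ∑ i, ‖c i‖ ^ 2 ≤ frobSq A := by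
    rw [hfrobE, ← hbb]
    refine Finset.sum_le_sum fun j _ => ?_
    rw [← parseval' b (T (b j))]
    refine Finset.single_le_sum (f := fun i => ‖(inner ℂ (b i) (T (b j)) : ℂ)‖ ^ 2)
      (fun i _ => by positivity) (Finset.mem_univ j)
  -- center
  set m : ℂ := A.trace / (n : ℂ) with hm
  have hnC : (n : ℂ) ≠ 0 := by exact_mod_cast hn0.ne'
  have hnm : (n : ℂ) * m = A.trace := by rw [hm, mul_div_cancel₀ _ hnC]
  set d : Fin n → ℂ := fun i => c i - m with hd
  have hd0 : ∑ i, d i = 0 := by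
    rw [hd]
    rw [Finset.sum_sub_distrib, htr, Finset.sum_const, Finset.card_univ, Fintype.card_fin,
      nsmul_eq_mul, hnm]
    ring
  have hsum_d : ∑ i, ‖d i‖ ^ 2
      = (∑ i, ‖c i‖ ^ 2) - ‖A.trace‖ ^ 2 / n := by
    have h1 : ∀ i, ‖d i‖ ^ 2
        = ‖c i‖ ^ 2 - 2 * ((c i) * (starRingEnd ℂ) m).re + Complex.normSq m := by
      intro i
      rw [hd]
      simp only [Complex.sq_norm, Complex.normSq_sub]
      ring
    rw [Finset.sum_congr rfl fun i _ => h1 i]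
    rw [Finset.sum_add_distrib, Finset.sum_sub_distrib, Finset.sum_const, Finset.card_univ,
      Fintype.card_fin, nsmul_eq_mul]
    have h2 : ∑ i, 2 * ((c i) * (starRingEnd ℂ) m).re
        = 2 * ((A.trace) * (starRingEnd ℂ) m).re := by
      rw [← Finset.mul_sum, ← Complex.re_sum, ← Finset.sum_mul, htr]
    have h3 : (A.trace * (starRingEnd ℂ) m).re = (n : ℝ) * Complex.normSq m := by
      rw [← hnm, mul_assoc, Complex.mul_conj]
      rw [show ((n:ℂ) * (Complex.normSq m : ℂ)) = (((n : ℝ) * Complex.normSq m : ℝ) : ℂ) by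
        push_cast; ring]
      rw [Complex.ofReal_re]
    have h4 : (n : ℝ) * Complex.normSq m = ‖A.trace‖ ^ 2 / n := by
      rw [hm, Complex.normSq_div, Complex.normSq_natCast, ← Complex.sq_norm]
      have hnR : (n : ℝ) ≠ 0 := by exact_mod_cast hn0.ne'
      field_simp
    rw [h2, h3, h4]
    ring
  have hdq : ∑ i, ‖d i‖ ^ 2 ≤ q := by
    rw [hsum_d, hq]
    linarith [hc2]
  have hdδ : ∀ i : Fin n, (i : ℕ) < t → d i = lam - m := by
    intro i hi
    rw [hd]
    simp only [hct i hi]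
  exact scalar_bound ht1 htn d (lam - m) hd0 hdδ q hdq
end
end

section
/- Let A be an n×n complex matrix and let ℜ_A = (A + A*)/2 be its Hermitian real part. If λ is an eigenvalue of ℜ_A with geometric multiplicity t, then |λ − tr(ℜ_A)/n| ≤ √((n−t)/(nt) · q_{ℜ_A}), where q_B = ‖B‖² − |tr(B)|²/n. -/
open Matrix

theorem aux_dim (n : ℕ) (M : Matrix (Fin n) (Fin n) ℂ) (hH : M.IsHermitian) (lam : ℂ)
    (S : Finset (Fin n)) (hS : S = Finset.univ.filter (fun i => ((hH.eigenvalues i : ℂ) = lam))) :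
    Module.finrank ℂ (Module.End.eigenspace (Matrix.toLin' M) lam) ≤ S.card := by
  classical
  set w : Fin n → (Fin n → ℂ) := fun i => ⇑(hH.eigenvectorBasis i) with hw
  have key : Module.End.eigenspace (Matrix.toLin' M) lam ≤
      Submodule.span ℂ (↑(S.image w) : Set (Fin n → ℂ)) := by
    intro x hx
    have hx' : M *ᵥ x = lam • x := by
      have := (Module.End.mem_eigenspace_iff.mp hx)
      simpa [Matrix.toLin'_apply] using this
    set b := hH.eigenvectorBasis.toBasis with hb
    set c : Fin n → ℂ := fun i => b.repr (WithLp.toLp 2 x) i with hc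
    have hrepr : x = ∑ i, c i • w i := by
      have h := congrArg WithLp.ofLp (b.sum_repr (WithLp.toLp 2 x))
      simpa only [WithLp.ofLp_sum, WithLp.ofLp_smul, WithLp.ofLp_toLp, hb,
        OrthonormalBasis.coe_toBasis] using h.symm
    have hcoef : ∀ i, c i * (hH.eigenvalues i : ℂ) = c i * lam := by
      have h1 : M *ᵥ x = ∑ i, (c i * (hH.eigenvalues i : ℂ)) • w i := by
        conv_lhs => rw [hrepr]
        rw [show M *ᵥ (∑ i, c i • w i) = ∑ i, c i • (M *ᵥ w i) by
          simp [Matrix.mulVec_sum, Matrix.mulVec_smul]]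
        refine Finset.sum_congr rfl fun i _ => ?_
        rw [show M *ᵥ w i = (hH.eigenvalues i : ℝ) • w i from hH.mulVec_eigenvectorBasis i]
        ext j
        simp [mul_comm, Complex.real_smul, mul_assoc, mul_left_comm]
      have h2 : lam • x = ∑ i, (c i * lam) • w i := by
        conv_lhs => rw [hrepr]
        rw [Finset.smul_sum]
        refine Finset.sum_congr rfl fun i _ => ?_
        rw [smul_smul, mul_comm]
      have h3 : ∑ i, (c i * (hH.eigenvalues i : ℂ)) • w i
          = ∑ i, (c i * lam) • w i := by rw [← h1, ← h2, hx']
      have e1 := b.repr_sum_self (fun j => c j * (hH.eigenvalues j : ℂ))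
      have e2 := b.repr_sum_self (fun j => c j * lam)
      rw [show (∑ j, (c j * (hH.eigenvalues j : ℂ)) • b j : EuclideanSpace ℂ (Fin n))
          = ∑ j, (c j * lam) • b j from by
            apply WithLp.ofLp_injective; simpa [WithLp.ofLp_sum, hw, hb, OrthonormalBasis.coe_toBasis] using h3, e2] at e1
      intro i
      exact (congrFun e1 i).symm
    rw [hrepr]
    apply Submodule.sum_mem
    intro i _
    by_cases hi : (hH.eigenvalues i : ℂ) = lam
    · apply Submodule.smul_mem
      apply Submodule.subset_span
      simp only [Finset.coe_image, Set.mem_image, Finset.mem_coe]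
      exact ⟨i, by simp [hS, hi], rfl⟩
    · have : c i = 0 := by
        by_contra hci
        exact hi (mul_left_cancel₀ hci (hcoef i))
      simp [this]
  calc Module.finrank ℂ (Module.End.eigenspace (Matrix.toLin' M) lam)
      ≤ Module.finrank ℂ (Submodule.span ℂ (↑(S.image w) : Set (Fin n → ℂ))) :=
        Submodule.finrank_mono key
    _ ≤ (S.image w).card := finrank_span_finset_le_card _
    _ ≤ S.card := Finset.card_image_le

theorem aux_trace (n : ℕ) (M : Matrix (Fin n) (Fin n) ℂ) (hH : M.IsHermitian) :
    M.trace = ∑ i, (hH.eigenvalues i : ℂ) := by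
  conv_lhs => rw [hH.spectral_theorem]
  rw [Unitary.conjStarAlgAut_apply, Matrix.trace_mul_comm, ← mul_assoc,
    Matrix.mem_unitaryGroup_iff'.mp (hH.eigenvectorUnitary).2, one_mul, Matrix.trace_diagonal]
  simp

theorem aux_frob (n : ℕ) (M : Matrix (Fin n) (Fin n) ℂ) (hH : M.IsHermitian) :
    (∑ i, ∑ j, ‖M i j‖ ^ 2) = ∑ i, hH.eigenvalues i ^ 2 := by
  have h1 : (Mᴴ * M).trace = ∑ j, ∑ i, ((‖M i j‖ ^ 2 : ℝ) : ℂ) := by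
    rw [Matrix.trace]
    refine Finset.sum_congr rfl fun j _ => ?_
    simp [Matrix.mul_apply, Matrix.conjTranspose_apply, ← Complex.normSq_eq_norm_sq,
      Complex.normSq_eq_conj_mul_self]
  have h2 : (Mᴴ * M).trace = ∑ i, ((hH.eigenvalues i ^ 2 : ℝ) : ℂ) := by
    rw [hH.eq]  -- Mᴴ = M
    conv_lhs => rw [hH.spectral_theorem]
    rw [Unitary.conjStarAlgAut_apply]
    rw [show ∀ (U D : Matrix (Fin n) (Fin n) ℂ), (U * D * star U) * (U * D * star U)
        = U * (D * (star U * U) * D) * star U from fun U D => by noncomm_ring,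
      Matrix.mem_unitaryGroup_iff'.mp (hH.eigenvectorUnitary).2]
    rw [Matrix.trace_mul_comm, ← mul_assoc,
      Matrix.mem_unitaryGroup_iff'.mp (hH.eigenvectorUnitary).2, one_mul]
    simp [Matrix.diagonal_mul_diagonal, Matrix.trace_diagonal, sq]
  have := h1.symm.trans h2
  have h3 : ((∑ j, ∑ i, ‖M i j‖ ^ 2 : ℝ) : ℂ) = ((∑ i, hH.eigenvalues i ^ 2 : ℝ) : ℂ) := by
    push_cast
    exact_mod_cast this
  rw [Finset.sum_comm]
  exact_mod_cast h3

theorem aux_real (n t s : ℕ) (μ : Fin n → ℝ) (S : Finset (Fin n)) (lam' : ℝ)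
    (hs : S.card = s) (hts : t ≤ s) (ht1 : 1 ≤ t)
    (hSlam : ∀ i ∈ S, μ i = lam')
    (q : ℝ) (hq : q = ∑ i, μ i ^ 2 - (∑ i, μ i) ^ 2 / n) :
    |lam' - (∑ i, μ i) / n| ≤ Real.sqrt (((n : ℝ) - t) / ((n : ℝ) * t) * q) := by
  classical
  have hsn : s ≤ n := by
    rw [← hs]
    simpa using Finset.card_le_univ S
  have hn1 : 1 ≤ n := le_trans (le_trans ht1 hts) hsn
  have hn0 : (0 : ℝ) < n := by exact_mod_cast hn1
  have ht0 : (0 : ℝ) < t := by exact_mod_cast ht1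
  have hs0 : (0 : ℝ) < s := by exact_mod_cast lt_of_lt_of_le ht1 hts
  set T : ℝ := ∑ i, μ i with hT
  set m : ℝ := T / n with hm
  set d : Fin n → ℝ := fun i => μ i - m with hd
  set r : ℝ := lam' - m with hr
  have hsum_d : ∑ i, d i = 0 := by
    simp only [hd, Finset.sum_sub_distrib, Finset.sum_const, Finset.card_univ,
      Fintype.card_fin, nsmul_eq_mul, hm]
    field_simp
    simp [hT]
  have hqd : q = ∑ i, d i ^ 2 := by
    have : ∑ i, d i ^ 2 = ∑ i, μ i ^ 2 - 2 * m * T + n * m ^ 2 := by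
      simp only [hd, sub_sq, Finset.sum_add_distrib, Finset.sum_sub_distrib,
        Finset.sum_const, Finset.card_univ, Fintype.card_fin, nsmul_eq_mul]
      have : ∑ x, 2 * μ x * m = 2 * m * T := by
        rw [hT, Finset.mul_sum]
        exact Finset.sum_congr rfl fun i _ => by ring
      rw [this]
    rw [hq, this, hm]
    field_simp
    ring
  have hq0 : 0 ≤ q := by
    rw [hqd]; positivity
  have hsum_S : ∑ i ∈ S, d i = s * r := by
    rw [Finset.sum_congr rfl (fun i hi => show d i = r by rw [hd, hr]; simp [hSlam i hi])]
    simp [hs, mul_comm]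
  have hsum_Sc : ∑ i ∈ Sᶜ, d i = -(s * r) := by
    have := Finset.sum_add_sum_compl S d
    rw [hsum_S, hsum_d] at this
    linarith
  have hcard_Sc : (Sᶜ.card : ℝ) = n - s := by
    rw [Finset.card_compl, hs, Fintype.card_fin, Nat.cast_sub hsn]
  set Q : ℝ := ∑ i ∈ Sᶜ, d i ^ 2 with hQ
  have hQ0 : 0 ≤ Q := by positivity
  have cheb : (s * r) ^ 2 ≤ ((n : ℝ) - s) * Q := by
    have h := sq_sum_le_card_mul_sum_sq (s := Sᶜ) (f := d)
    rw [hsum_Sc] at h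
    calc (s * r) ^ 2 = (-(s * r)) ^ 2 := by ring
      _ ≤ (Sᶜ.card : ℝ) * Q := by exact_mod_cast h
      _ = ((n : ℝ) - s) * Q := by rw [hcard_Sc]
  have hqsplit : q = s * r ^ 2 + Q := by
    rw [hqd, ← Finset.sum_add_sum_compl S (fun i => d i ^ 2), ← hQ,
      Finset.sum_congr rfl (fun i hi => show d i ^ 2 = r ^ 2 by
        rw [hd, hr]; simp [hSlam i hi])]
    simp [hs, mul_comm]
  have key : (n : ℝ) * s * r ^ 2 ≤ ((n : ℝ) - s) * q := by
    nlinarith [cheb, hQ0, sq_nonneg r]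
  have key2 : (n : ℝ) * t * r ^ 2 ≤ ((n : ℝ) - t) * q := by
    have hst : (t : ℝ) ≤ s := by exact_mod_cast hts
    nlinarith [key, mul_nonneg hq0 (mul_nonneg hn0.le (sub_nonneg.mpr hst)), sq_nonneg r,
      mul_nonneg (mul_nonneg hn0.le (sub_nonneg.mpr hst)) (sq_nonneg r)]
  have key3 : r ^ 2 ≤ ((n : ℝ) - t) / ((n : ℝ) * t) * q := by
    rw [div_mul_eq_mul_div, le_div_iff₀ (by positivity)]
    linarith [key2]
  calc |lam' - T / n| = Real.sqrt (r ^ 2) := by rw [Real.sqrt_sq_eq_abs, hr, hm]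
    _ ≤ Real.sqrt (((n : ℝ) - t) / ((n : ℝ) * t) * q) := Real.sqrt_le_sqrt key3

theorem eigenvalue_bound_hermitian_real_part (n t : ℕ)
    (A : Matrix (Fin n) (Fin n) ℂ)
    (ReA : Matrix (Fin n) (Fin n) ℂ) (hReA : ReA = (2 : ℂ)⁻¹ • (A + Aᴴ)) (lam : ℂ)
    (hlam : Module.End.HasEigenvalue (Matrix.toLin' ReA) lam)
    (ht : Module.finrank ℂ (Module.End.eigenspace (Matrix.toLin' ReA) lam) = t)
    (frobSq : Matrix (Fin n) (Fin n) ℂ → ℝ)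
    (hfrob : ∀ B, frobSq B = ∑ i, ∑ j, ‖B i j‖ ^ 2)
    (q : ℝ) (hq : q = frobSq ReA - ‖ReA.trace‖ ^ 2 / n) :
    ‖lam - ReA.trace / n‖ ≤
      Real.sqrt (((n : ℝ) - t) / ((n : ℝ) * t) * q) := by
  classical
  have hH : ReA.IsHermitian := by
    rw [hReA]
    unfold Matrix.IsHermitian
    rw [Matrix.conjTranspose_smul, Matrix.conjTranspose_add, Matrix.conjTranspose_conjTranspose]
    congr 1
    · simp [Complex.star_def, Complex.conj_inv]
    · rw [add_comm]
  set μ : Fin n → ℝ := hH.eigenvalues with hμ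
  set S : Finset (Fin n) := Finset.univ.filter (fun i => ((μ i : ℂ) = lam)) with hSdef
  have hts : t ≤ S.card := ht ▸ aux_dim n ReA hH lam S rfl
  have ht1 : 1 ≤ t := by
    rw [← ht]
    by_contra h
    push_neg at h
    have h0 : Module.finrank ℂ (Module.End.eigenspace (Matrix.toLin' ReA) lam) = 0 :=
      Nat.lt_one_iff.mp h
    exact hlam (Submodule.finrank_eq_zero.mp h0)
  have hSne : S.Nonempty := Finset.card_pos.mp (lt_of_lt_of_le ht1 hts)
  obtain ⟨i₀, hi₀⟩ := hSne
  have hi₀' : (μ i₀ : ℂ) = lam := (Finset.mem_filter.mp hi₀).2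
  set lam' : ℝ := μ i₀ with hlam'
  have hSlam : ∀ i ∈ S, μ i = lam' := by
    intro i hi
    have := (Finset.mem_filter.mp hi).2
    exact_mod_cast this.trans hi₀'.symm
  have htr : ReA.trace = ((∑ i, μ i : ℝ) : ℂ) := by
    rw [aux_trace n ReA hH]
    push_cast
    rfl
  have habs_tr : ‖ReA.trace‖ = |∑ i, μ i| := by
    rw [htr, Complex.norm_real, Real.norm_eq_abs]
  have hq' : q = ∑ i, μ i ^ 2 - (∑ i, μ i) ^ 2 / n := by
    rw [hq, hfrob, aux_frob n ReA hH, habs_tr, sq_abs]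
  have hLHS : ‖lam - ReA.trace / n‖ = |lam' - (∑ i, μ i) / n| := by
    rw [← hi₀', htr]
    rw [show ((lam' : ℂ) - ((∑ i, μ i : ℝ) : ℂ) / (n : ℂ)) = (((lam' - (∑ i, μ i) / n : ℝ)) : ℂ) by
      push_cast; ring]
    exact (Complex.norm_real _).trans (Real.norm_eq_abs _)
  rw [hLHS]
  exact aux_real n t S.card μ S lam' rfl hts ht1 hSlam q hq'
end

section
/- Let A be an n×n complex matrix and let ℑ_A = (A − A*)/(2i) be its Hermitian imaginary part. If λ is an eigenvalue of ℑ_A with geometric multiplicity t, then |λ − tr(ℑ_A)/n| ≤ √((n−t)/(nt) · q_{ℑ_A}), where q_B = ‖B‖² − |tr(B)|²/n. -/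
open Matrix
set_option maxHeartbeats 1000000

theorem eigenvalue_bound_hermitian_imag_part (n t : ℕ)
    (A : Matrix (Fin n) (Fin n) ℂ)
    (ImA : Matrix (Fin n) (Fin n) ℂ)
    (hImA : ImA = (2 * Complex.I)⁻¹ • (A - Aᴴ)) (lam : ℂ)
    (hlam : Module.End.HasEigenvalue (Matrix.toLin' ImA) lam)
    (ht : Module.finrank ℂ (Module.End.eigenspace (Matrix.toLin' ImA) lam) = t)
    (frobSq : Matrix (Fin n) (Fin n) ℂ → ℝ)
    (hfrob : ∀ B, frobSq B = ∑ i, ∑ j, ‖B i j‖ ^ 2)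
    (q : ℝ) (hq : q = frobSq ImA - ‖ImA.trace‖ ^ 2 / n) :
    ‖lam - ImA.trace / n‖ ≤
      Real.sqrt (((n : ℝ) - t) / ((n : ℝ) * t) * q) := by
  classical
  -- ImA is Hermitian
  have hH : ImA.IsHermitian := by
    rw [hImA, Matrix.IsHermitian, conjTranspose_smul, conjTranspose_sub,
      conjTranspose_conjTranspose]
    rw [show star (2 * Complex.I)⁻¹ = -(2 * Complex.I)⁻¹ by
      rw [star_inv₀, show star (2 * Complex.I) = -(2 * Complex.I) by
        simp [Complex.star_def, mul_neg], inv_neg]]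
    rw [← neg_sub A Aᴴ, smul_neg, neg_smul, neg_neg]
  set μ : Fin n → ℝ := hH.eigenvalues with hμ
  set U : Matrix (Fin n) (Fin n) ℂ := (hH.eigenvectorUnitary : Matrix (Fin n) (Fin n) ℂ) with hU
  set D : Matrix (Fin n) (Fin n) ℂ := diagonal (RCLike.ofReal ∘ μ) with hD
  have hspec : ImA = U * D * star U := hH.spectral_theorem
  have hsUU : star U * U = 1 := Matrix.mem_unitaryGroup_iff'.mp (hH.eigenvectorUnitary).2
  have hUsU : U * star U = 1 := Matrix.mem_unitaryGroup_iff.mp (hH.eigenvectorUnitary).2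
  have hdetU : IsUnit U.det := (Matrix.isUnit_iff_isUnit_det U).mp ⟨⟨U, star U, hUsU, hsUU⟩, rfl⟩
  have hdetsU : IsUnit (star U).det :=
    (Matrix.isUnit_iff_isUnit_det _).mp ⟨⟨star U, U, hsUU, hUsU⟩, rfl⟩
  -- trace
  have htr : ImA.trace = ((∑ i, μ i : ℝ) : ℂ) := by
    conv_lhs => rw [hspec, Matrix.trace_mul_cycle, hsUU, Matrix.one_mul]
    rw [Matrix.trace_diagonal]
    push_cast
    rfl
  -- Frobenius norm squared
  have hcancel : ∀ X : Matrix (Fin n) (Fin n) ℂ, star U * (U * X) = X := by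
    intro X; rw [← Matrix.mul_assoc, hsUU, Matrix.one_mul]
  have hsq : ImA * ImA = U * (D * D) * star U := by
    conv_lhs => rw [hspec]
    simp only [Matrix.mul_assoc, hcancel]
  have hfrobSq : frobSq ImA = ∑ i, μ i ^ 2 := by
    have h1 : ((frobSq ImA : ℝ) : ℂ) = (ImAᴴ * ImA).trace := by
      rw [hfrob]
      push_cast
      rw [Matrix.trace, Finset.sum_comm]
      refine Finset.sum_congr rfl fun j _ => ?_
      rw [Matrix.diag_apply, Matrix.mul_apply]
      refine Finset.sum_congr rfl fun i _ => ?_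
      rw [Matrix.conjTranspose_apply, RCLike.star_def, mul_comm, Complex.mul_conj,
        Complex.normSq_eq_norm_sq]
      push_cast
      ring
    have h2 : (ImAᴴ * ImA).trace = ((∑ i, μ i ^ 2 : ℝ) : ℂ) := by
      rw [hH.eq, hsq, Matrix.trace_mul_cycle, hsUU, Matrix.one_mul,
        hD, Matrix.diagonal_mul_diagonal, Matrix.trace_diagonal]
      push_cast
      refine Finset.sum_congr rfl fun i _ => ?_
      simp [pow_two]
    exact Complex.ofReal_inj.mp (h1.trans h2)
  -- multiplicity
  set d : Fin n → ℂ := fun i => (μ i : ℂ) - lam with hd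
  have hBeq : ImA - lam • (1 : Matrix (Fin n) (Fin n) ℂ) = U * diagonal d * star U := by
    have h1 : lam • (1 : Matrix (Fin n) (Fin n) ℂ) = U * (lam • 1) * star U := by
      rw [Matrix.mul_smul, Matrix.smul_mul, Matrix.mul_one, hUsU]
    conv_lhs => rw [hspec, h1]
    rw [← Matrix.sub_mul, ← Matrix.mul_sub, smul_one_eq_diagonal, hD, Matrix.diagonal_sub]
    rfl
  have hrankB : (ImA - lam • (1 : Matrix (Fin n) (Fin n) ℂ)).rank
      = Fintype.card {i // d i ≠ 0} := by
    rw [hBeq, Matrix.rank_mul_eq_left_of_isUnit_det _ _ hdetsU,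
      Matrix.rank_mul_eq_right_of_isUnit_det _ _ hdetU, Matrix.rank_diagonal]
  have hker : Module.End.eigenspace (Matrix.toLin' ImA) lam
      = LinearMap.ker ((ImA - lam • (1 : Matrix (Fin n) (Fin n) ℂ)).mulVecLin) := by
    rw [Module.End.eigenspace_def]
    congr 1
    refine LinearMap.ext fun v => ?_
    simp [Matrix.mulVecLin_apply, Matrix.toLin'_apply, Matrix.sub_mulVec, Matrix.smul_mulVec,
      Module.End.one_apply]
  have hrn := LinearMap.finrank_range_add_finrank_ker
    ((ImA - lam • (1 : Matrix (Fin n) (Fin n) ℂ)).mulVecLin)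
  rw [Module.finrank_fin_fun] at hrn
  have hrankdef : (ImA - lam • (1 : Matrix (Fin n) (Fin n) ℂ)).rank
      = Module.finrank ℂ (LinearMap.range ((ImA - lam • (1 : Matrix (Fin n) (Fin n) ℂ)).mulVecLin)) := rfl
  -- t = number of eigenvalues equal to lam
  set T : Finset (Fin n) := Finset.univ.filter (fun i => d i = 0) with hT
  have hcardcompl : Fintype.card {i // d i ≠ 0} = (Finset.univ.filter (fun i => ¬ (d i = 0))).card := by
    simp [Fintype.card_subtype, ne_eq]
  have hcards : T.card + (Finset.univ.filter (fun i => ¬ (d i = 0))).card = n := by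
    rw [hT, Finset.card_filter_add_card_filter_not, Finset.card_univ, Fintype.card_fin]
  have htT : T.card = t := by
    have h1 : t + (ImA - lam • (1 : Matrix (Fin n) (Fin n) ℂ)).rank = n := by
      rw [← ht, hker]
      rw [hrankdef]
      omega
    rw [hrankB, hcardcompl] at h1
    omega
  -- t ≥ 1 and lam is real
  have htpos : 0 < t := by
    rw [← ht]
    refine Module.finrank_pos_iff.mpr ?_
    exact Submodule.nontrivial_iff_ne_bot.mpr hlam
  have hTne : T.Nonempty := by
    rw [← Finset.card_pos, htT]; exact htpos
  obtain ⟨i₀, hi₀⟩ := hTne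
  have hi₀' : (μ i₀ : ℂ) = lam := by
    have := (Finset.mem_filter.mp hi₀).2
    simpa [hd, sub_eq_zero] using this
  set lr : ℝ := μ i₀ with hlr
  have hlamr : lam = (lr : ℂ) := hi₀'.symm
  have htn : t ≤ n := by
    rw [← htT]
    exact (Finset.card_filter_le _ _).trans (by simp)
  have hnpos : 0 < n := lt_of_lt_of_le htpos htn
  -- real quantities
  set s : ℝ := ∑ i ∈ Finset.univ.filter (fun i => ¬ (d i = 0)), μ i with hs
  set P : ℝ := ∑ i ∈ Finset.univ.filter (fun i => ¬ (d i = 0)), μ i ^ 2 with hP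
  have hTval : ∀ i ∈ T, μ i = lr := by
    intro i hi
    have := (Finset.mem_filter.mp hi).2
    have h2 : (μ i : ℂ) = lam := by simpa [hd, sub_eq_zero] using this
    have := h2.trans hlamr.symm.symm
    exact_mod_cast h2.trans hlamr
  have hsum1 : (∑ i, μ i) = t * lr + s := by
    rw [← Finset.sum_filter_add_sum_filter_not Finset.univ (fun i => d i = 0) μ]
    congr 1
    rw [Finset.sum_congr rfl hTval, Finset.sum_const, htT, nsmul_eq_mul]
  have hsum2 : (∑ i, μ i ^ 2) = t * lr ^ 2 + P := by
    rw [← Finset.sum_filter_add_sum_filter_not Finset.univ (fun i => d i = 0) (fun i => μ i ^ 2)]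
    congr 1
    rw [Finset.sum_congr rfl (fun i hi => by rw [hTval i hi]), Finset.sum_const, htT, nsmul_eq_mul]
  have hcardc : ((Finset.univ.filter (fun i => ¬ (d i = 0))).card : ℝ) = (n : ℝ) - t := by
    have : (Finset.univ.filter (fun i => ¬ (d i = 0))).card = n - t := by omega
    rw [this]
    push_cast [htn]
    ring
  have hcs : s ^ 2 ≤ ((n : ℝ) - t) * P := by
    rw [← hcardc]
    exact sq_sum_le_card_mul_sum_sq
  -- rewrite q
  have habs_tr : ‖ImA.trace‖ ^ 2 = (∑ i, μ i) ^ 2 := by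
    rw [htr, Complex.norm_real, Real.norm_eq_abs, sq_abs]
  have hqval : q = t * lr ^ 2 + P - (t * lr + s) ^ 2 / n := by
    rw [hq, hfrobSq, habs_tr, hsum1, hsum2]
  -- rewrite the LHS
  have hlhs : ‖lam - ImA.trace / n‖ = |lr - (t * lr + s) / n| := by
    rw [hlamr, htr, hsum1]
    rw [show ((lr : ℂ) - ((((t : ℝ) * lr + s : ℝ)) : ℂ) / (n : ℂ))
        = (((lr - ((t : ℝ) * lr + s) / n : ℝ)) : ℂ) by push_cast; ring]
    rw [Complex.norm_real, Real.norm_eq_abs]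
  -- the key real inequality
  have hnR : (0 : ℝ) < n := by exact_mod_cast hnpos
  have htR : (0 : ℝ) < t := by exact_mod_cast htpos
  have key : (lr - ((t : ℝ) * lr + s) / n) ^ 2 * ((n : ℝ) * t) ≤ ((n : ℝ) - t) * q := by
    rw [hqval]
    have expand1 : (lr - ((t : ℝ) * lr + s) / n) ^ 2 * ((n : ℝ) * t)
        = ((((n : ℝ) - t) * lr - s) ^ 2 * t) / n := by
      field_simp
      ring
    have expand2 : ((n : ℝ) - t) * ((t : ℝ) * lr ^ 2 + P - ((t : ℝ) * lr + s) ^ 2 / n)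
        = (((n : ℝ) - t) * ((n : ℝ) * ((t : ℝ) * lr ^ 2 + P)) - ((n : ℝ) - t) * ((t : ℝ) * lr + s) ^ 2) / n := by
      field_simp
    rw [expand1, expand2]
    gcongr ?_ / (n : ℝ)
    nlinarith [mul_nonneg (le_of_lt hnR) (sub_nonneg.mpr hcs)]
  have hqnn : 0 ≤ ((n : ℝ) - t) * q := le_trans (by positivity) key
  have hrhs_nn : 0 ≤ ((n : ℝ) - t) / ((n : ℝ) * t) * q := by
    rw [div_mul_eq_mul_div]
    positivity
  rw [hlhs]
  rw [Real.le_sqrt (abs_nonneg _) hrhs_nn]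
  rw [sq_abs, div_mul_eq_mul_div, le_div_iff₀ (by positivity)]
  exact key
end

section
/- Let A be an n×n complex matrix (n ≥ 1) and let λ be an eigenvalue of A of maximal modulus. Then |tr(A)|/n ≤ |λ| ≤ |tr(A)|/n + √((n−1)/n · q_A), where q_A = ‖A‖² − |tr(A)|²/n and ‖·‖ is the Frobenius norm. -/
open Matrix Polynomial

-- multiset lemmas
lemma ms_abs_sum (s : Multiset ℂ) : norm s.sum ≤ (s.map norm).sum := by
  induction s using Multiset.induction_on with
  | empty => simp
  | cons a t ih =>
    simp only [Multiset.sum_cons, Multiset.map_cons]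
    calc norm (a + t.sum) ≤ norm a + norm t.sum := norm_add_le _ _
    _ ≤ norm a + (t.map norm).sum := by linarith

lemma ms_cs (s : Multiset ℂ) :
    norm s.sum ^ 2 ≤ (s.card : ℝ) * (s.map (fun z => norm z ^ 2)).sum := by
  induction s using Multiset.induction_on with
  | empty => simp
  | cons a t ih =>
    simp only [Multiset.sum_cons, Multiset.map_cons, Multiset.card_cons, Multiset.sum_cons]
    have h1 : norm (a + t.sum) ≤ norm a + norm t.sum := norm_add_le _ _
    set A := norm a with hA
    set S := norm t.sum with hS
    set c := (t.card : ℝ) with hc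
    set Q := (t.map (fun z => norm z ^ 2)).sum with hQ
    have hA0 : 0 ≤ A := norm_nonneg _
    have hS0 : 0 ≤ S := norm_nonneg _
    have hc0 : 0 ≤ c := Nat.cast_nonneg _
    have hQ0 : 0 ≤ Q := by
      rw [hQ]; apply Multiset.sum_nonneg; intro x hx
      obtain ⟨z, _, rfl⟩ := Multiset.mem_map.mp hx
      positivity
    have h2 : norm (a + t.sum) ^ 2 ≤ (A + S) ^ 2 := by
      apply pow_le_pow_left₀ (norm_nonneg _) h1
    have hcast : ((t.card + 1 : ℕ) : ℝ) = c + 1 := by push_cast; rfl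
    rw [hcast]
    have hq2 : 0 ≤ c * Q - S ^ 2 := by linarith
    rcases eq_or_ne t.card 0 with h0 | h0
    · have ht : t = 0 := Multiset.card_eq_zero.mp h0
      subst ht
      have hSS : S = 0 := by rw [hS]; simp
      have hQQ : Q = 0 := by rw [hQ]; simp
      have hcc : c = 0 := by rw [hc]; simp
      nlinarith [h2]
    · have hc1 : (1 : ℝ) ≤ c := by
        rw [hc]; exact_mod_cast Nat.one_le_iff_ne_zero.mpr h0
      nlinarith [sq_nonneg (c * A - S), mul_nonneg hc0 hq2, h2, hq2]

noncomputable def fro {m : ℕ} (B : Matrix (Fin m) (Fin m) ℂ) : ℝ :=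
  ∑ i, ∑ j, norm (B i j) ^ 2

lemma fro_nonneg {m : ℕ} (B : Matrix (Fin m) (Fin m) ℂ) : 0 ≤ fro B := by
  apply Finset.sum_nonneg; intro i _; apply Finset.sum_nonneg; intro j _; positivity

lemma fro_eq_trace {m : ℕ} (B : Matrix (Fin m) (Fin m) ℂ) :
    ((Bᴴ * B).trace : ℂ) = (fro B : ℝ) := by
  unfold fro
  rw [Matrix.trace]
  push_cast
  rw [Finset.sum_comm]
  apply Finset.sum_congr rfl
  intro i _
  rw [Matrix.diag_apply, Matrix.mul_apply]
  apply Finset.sum_congr rfl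
  intro j _
  rw [Matrix.conjTranspose_apply]
  calc star (B j i) * B j i = (Complex.normSq (B j i) : ℂ) := by
        rw [Complex.normSq_eq_conj_mul_self]; rfl
    _ = (norm (B j i) : ℂ) ^ 2 := by rw [← Complex.sq_norm]; push_cast; ring

lemma fro_conj {m : ℕ} (U A : Matrix (Fin m) (Fin m) ℂ) (hU : Uᴴ * U = 1) :
    fro (Uᴴ * A * U) = fro A := by
  have hU2 : U * Uᴴ = 1 := mul_eq_one_comm.mp hU
  have key : ((Uᴴ * A * U)ᴴ * (Uᴴ * A * U)).trace = (Aᴴ * A).trace := by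
    have e1 : (Uᴴ * A * U)ᴴ = Uᴴ * Aᴴ * U := by
      simp [Matrix.conjTranspose_mul, Matrix.mul_assoc]
    rw [e1]
    have e2 : Uᴴ * Aᴴ * U * (Uᴴ * A * U) = Uᴴ * (Aᴴ * A) * U := by
      simp only [Matrix.mul_assoc]
      rw [← Matrix.mul_assoc U Uᴴ, hU2, Matrix.one_mul]
    rw [e2, Matrix.trace_mul_comm (Uᴴ * (Aᴴ * A)) U, ← Matrix.mul_assoc, ← Matrix.mul_assoc,
      hU2, Matrix.one_mul]
  have := (fro_eq_trace (Uᴴ * A * U)).symm.trans (key.trans (fro_eq_trace A))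
  exact_mod_cast this

lemma charpoly_conj {m : ℕ} (U A : Matrix (Fin m) (Fin m) ℂ) (hU : Uᴴ * U = 1) :
    (Uᴴ * A * U).charpoly = A.charpoly := by
  have hU2 : U * Uᴴ = 1 := mul_eq_one_comm.mp hU
  let f : Matrix (Fin m) (Fin m) ℂ →+* Matrix (Fin m) (Fin m) ℂ[X] :=
    (C : ℂ →+* ℂ[X]).mapMatrix
  have hf1 : f Uᴴ * f U = 1 := by rw [← _root_.map_mul, hU, _root_.map_one]
  have key : charmatrix (Uᴴ * A * U) = f Uᴴ * charmatrix A * f U := by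
    unfold charmatrix
    rw [Matrix.mul_sub, Matrix.sub_mul]
    congr 1
    · rw [Matrix.scalar_apply, ← Matrix.smul_one_eq_diagonal, Matrix.mul_smul, Matrix.smul_mul,
        Matrix.mul_one, hf1]
    · show f (Uᴴ * A * U) = f Uᴴ * f A * f U
      rw [_root_.map_mul, _root_.map_mul]
  rw [Matrix.charpoly, Matrix.charpoly, key, Matrix.det_mul, Matrix.det_mul]
  have hdet : (f Uᴴ).det * (f U).det = 1 := by
    rw [← Matrix.det_mul, hf1, Matrix.det_one]
  calc (f Uᴴ).det * (charmatrix A).det * (f U).det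
      = (charmatrix A).det * ((f Uᴴ).det * (f U).det) := by ring
    _ = (charmatrix A).det := by rw [hdet, mul_one]

-- eval of charpoly
lemma charpoly_eval {m : ℕ} (A : Matrix (Fin m) (Fin m) ℂ) (t : ℂ) :
    A.charpoly.eval t = (t • (1 : Matrix (Fin m) (Fin m) ℂ) - A).det := by
  rw [Matrix.charpoly]
  rw [← coe_evalRingHom, RingHom.map_det]
  congr 1
  ext i j
  by_cases h : i = j
  · subst h
    simp [Matrix.charmatrix_apply_eq, Matrix.map_apply, Matrix.one_apply, Matrix.sub_apply]
  · simp [Matrix.charmatrix_apply_ne _ _ _ h, Matrix.map_apply, Matrix.one_apply_ne h,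
      Matrix.sub_apply]

lemma exists_eigenvector {m : ℕ} (A : Matrix (Fin m) (Fin m) ℂ) (t : ℂ)
    (h : t ∈ A.charpoly.roots) : ∃ v : Fin m → ℂ, v ≠ 0 ∧ A *ᵥ v = t • v := by
  have hroot : A.charpoly.eval t = 0 := by
    exact (Polynomial.mem_roots (A.charpoly_monic.ne_zero)).mp h
  rw [charpoly_eval] at hroot
  obtain ⟨v, hv0, hv⟩ := (Matrix.exists_mulVec_eq_zero_iff).mpr hroot
  refine ⟨v, hv0, ?_⟩
  have : (t • (1 : Matrix (Fin m) (Fin m) ℂ)) *ᵥ v - A *ᵥ v = 0 := by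
    rw [← Matrix.sub_mulVec]; exact hv
  have h2 : (t • (1 : Matrix (Fin m) (Fin m) ℂ)) *ᵥ v = t • v := by
    rw [Matrix.smul_mulVec, Matrix.one_mulVec]
  rw [h2] at this
  have := sub_eq_zero.mp this
  exact this.symm ▸ rfl

-- charmatrix of principal submatrix
lemma charmatrix_submatrix {m : ℕ} (M : Matrix (Fin (m+1)) (Fin (m+1)) ℂ) :
    (charmatrix M).submatrix Fin.succ Fin.succ = charmatrix (M.submatrix Fin.succ Fin.succ) := by
  ext i j
  by_cases h : i = j
  · subst h; simp [Matrix.charmatrix_apply_eq]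
  · have h' : Fin.succ i ≠ Fin.succ j := fun hc => h (Fin.succ_injective _ hc)
    simp [Matrix.charmatrix_apply_ne _ _ _ h', Matrix.charmatrix_apply_ne _ _ _ h]

lemma charpoly_first_col {m : ℕ} (M : Matrix (Fin (m+1)) (Fin (m+1)) ℂ)
    (h0 : ∀ i, i ≠ 0 → M i 0 = 0) :
    M.charpoly = (X - C (M 0 0)) * (M.submatrix Fin.succ Fin.succ).charpoly := by
  rw [Matrix.charpoly, Matrix.det_succ_column_zero]
  rw [Finset.sum_eq_single 0]
  · rw [Fin.succAbove_zero, charmatrix_submatrix]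
    simp [Matrix.charpoly]
  · intro i _ hi
    have : charmatrix M i 0 = 0 := by
      rw [Matrix.charmatrix_apply_ne _ _ _ hi, h0 i hi, map_zero, neg_zero]
    rw [this, mul_zero, zero_mul]
  · intro h; exact absurd (Finset.mem_univ 0) h

lemma exists_unitary {m : ℕ} (A : Matrix (Fin (m+1)) (Fin (m+1)) ℂ) (t : ℂ)
    (hmem : t ∈ A.charpoly.roots) :
    ∃ U : Matrix (Fin (m+1)) (Fin (m+1)) ℂ, Uᴴ * U = 1 ∧
      (∀ i, i ≠ 0 → (Uᴴ * A * U) i 0 = 0) ∧ (Uᴴ * A * U) 0 0 = t := by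
  classical
  obtain ⟨v, hv0, hv⟩ := exists_eigenvector A t hmem
  set E := EuclideanSpace ℂ (Fin (m+1))
  set ve : E := (WithLp.equiv 2 (Fin (m+1) → ℂ)).symm v with hve
  have hve0 : ve ≠ 0 := by
    intro h; apply hv0
    have := congrArg (WithLp.equiv 2 (Fin (m+1) → ℂ)) h
    simpa [hve] using this
  set u : E := ‖ve‖⁻¹ • ve with hu
  have hu1 : ‖u‖ = 1 := norm_smul_inv_norm hve0
  -- u as a plain function
  have hufun : ∀ i, u i = ‖ve‖⁻¹ • v i := by intro i; rfl
  have huv : A *ᵥ (fun i => u i) = t • (fun i => u i) := by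
    have : (fun i => u i) = (‖ve‖⁻¹ : ℂ) • v := by
      funext i; rw [hufun]; simp [Complex.real_smul]
    rw [this, Matrix.mulVec_smul, hv, smul_comm]
  -- orthonormal singleton
  have hon : Orthonormal ℂ (({0} : Set (Fin (m+1))).restrict (fun _ => u)) := by
    constructor
    · intro i; exact hu1
    · intro i j hij
      exact absurd (Subtype.ext ((i.2 : (i : Fin (m+1)) ∈ ({0}:Set _)).trans
        ((j.2 : (j : Fin (m+1)) ∈ ({0}:Set _)).symm))) hij
  have hcard : Module.finrank ℂ E = Fintype.card (Fin (m+1)) := by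
    simp [E, finrank_euclideanSpace]
  obtain ⟨b, hb⟩ := hon.exists_orthonormalBasis_extension_of_card_eq hcard
  have hb0 : b 0 = u := hb 0 rfl
  set U : Matrix (Fin (m+1)) (Fin (m+1)) ℂ := Matrix.of (fun i j => b j i) with hU
  have hinner : ∀ i j : Fin (m+1), (inner ℂ (b i) (b j) : ℂ) = if i = j then 1 else 0 :=
    orthonormal_iff_ite.mp b.orthonormal
  have hUuni : Uᴴ * U = 1 := by
    ext i j
    rw [Matrix.mul_apply, Matrix.one_apply]
    have : ∀ k, Uᴴ i k * U k j = (starRingEnd ℂ) (b i k) * (b j k) := by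
      intro k; rw [Matrix.conjTranspose_apply, hU]; rfl
    rw [Finset.sum_congr rfl (fun k _ => this k)]
    have h2 := hinner i j
    rw [PiLp.inner_apply] at h2
    simp only [RCLike.inner_apply'] at h2
    exact h2
  -- column computation
  have hcol : ∀ i, (Uᴴ * A * U) i 0 = t * (if i = 0 then 1 else 0) := by
    intro i
    rw [Matrix.mul_assoc, Matrix.mul_apply]
    have hAU : ∀ k, (A * U) k 0 = t * u k := by
      intro k
      rw [Matrix.mul_apply]
      have : ∀ j, A k j * U j 0 = A k j * u j := by
        intro j; rw [hU, Matrix.of_apply, hb0]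
      rw [Finset.sum_congr rfl (fun j _ => this j)]
      have := congrFun huv k
      simpa [Matrix.mulVec, dotProduct] using this
    have : ∀ k, Uᴴ i k * (A * U) k 0 = t * ((starRingEnd ℂ) (b i k) * u k) := by
      intro k
      rw [Matrix.conjTranspose_apply, hAU k, hU, Matrix.of_apply]
      simp only [Complex.star_def]
      ring
    rw [Finset.sum_congr rfl (fun k _ => this k), ← Finset.mul_sum]
    congr 1
    have : ∑ k, (starRingEnd ℂ) (b i k) * u k = (inner ℂ (b i) (b 0) : ℂ) := by
      rw [hb0, PiLp.inner_apply]
      simp only [RCLike.inner_apply']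
    rw [this, hinner]
  refine ⟨U, hUuni, fun i hi => ?_, ?_⟩
  · rw [hcol i, if_neg hi, mul_zero]
  · rw [hcol 0, if_pos rfl, mul_one]

lemma schur_sum : ∀ (m : ℕ) (A : Matrix (Fin m) (Fin m) ℂ),
    ((A.charpoly.roots).map (fun z => norm z ^ 2)).sum ≤ fro A := by
  intro m
  induction m with
  | zero =>
    intro A
    have h1 : A.charpoly = 1 := by
      rw [Matrix.charpoly]; exact Matrix.det_isEmpty
    rw [h1, Polynomial.roots_one]
    simpa using fro_nonneg A
  | succ m ih =>
    intro A
    have hcard : A.charpoly.roots.card = m + 1 := by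
      rw [Polynomial.splits_iff_card_roots.mp (IsAlgClosed.splits A.charpoly),
        Matrix.charpoly_natDegree_eq_dim, Fintype.card_fin]
    obtain ⟨μ, hμ⟩ := Multiset.card_pos_iff_exists_mem.mp (by rw [hcard]; omega)
    obtain ⟨U, hU, h0, hμ00⟩ := exists_unitary A μ hμ
    set M := Uᴴ * A * U with hM
    have hchar : M.charpoly = A.charpoly := charpoly_conj U A hU
    set B := M.submatrix Fin.succ Fin.succ with hB
    have hsplit : M.charpoly = (X - C μ) * B.charpoly := by
      rw [charpoly_first_col M h0, hμ00]
    have hroots : A.charpoly.roots = μ ::ₘ B.charpoly.roots := by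
      rw [← hchar, hsplit, Polynomial.roots_mul, Polynomial.roots_X_sub_C,
        Multiset.singleton_add]
      exact mul_ne_zero (Polynomial.X_sub_C_ne_zero μ) (B.charpoly_monic.ne_zero)
    have hfroB : (∑ i : Fin m, ∑ j : Fin m, norm (M i.succ j.succ) ^ 2) = fro B := by
      unfold fro; rfl
    have hfroM : fro M = (∑ j, norm (M 0 j) ^ 2)
        + ∑ i : Fin m, (norm (M i.succ 0) ^ 2
          + ∑ j : Fin m, norm (M i.succ j.succ) ^ 2) := by
      unfold fro
      rw [Fin.sum_univ_succ]
      congr 1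
      apply Finset.sum_congr rfl
      intro i _
      rw [Fin.sum_univ_succ]
    have hz : ∀ i : Fin m, norm (M i.succ 0) ^ 2 = 0 := by
      intro i; rw [h0 _ (Fin.succ_ne_zero i)]; simp
    have h00 : norm (M 0 0) ^ 2 = norm μ ^ 2 := by rw [hμ00]
    have hrow0 : norm μ ^ 2 ≤ ∑ j, norm (M 0 j) ^ 2 := by
      rw [← h00]
      exact Finset.single_le_sum (f := fun j => norm (M 0 j) ^ 2)
        (fun j _ => by positivity) (Finset.mem_univ 0)
    have hMB : norm μ ^ 2 + fro B ≤ fro M := by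
      rw [hfroM, ← hfroB]
      have : ∑ i : Fin m, (norm (M i.succ 0) ^ 2
          + ∑ j : Fin m, norm (M i.succ j.succ) ^ 2)
          = ∑ i : Fin m, ∑ j : Fin m, norm (M i.succ j.succ) ^ 2 := by
        apply Finset.sum_congr rfl
        intro i _
        rw [hz i, zero_add]
      rw [this]
      exact add_le_add_left hrow0 _
    calc ((A.charpoly.roots).map (fun z => norm z ^ 2)).sum
        = norm μ ^ 2 + ((B.charpoly.roots).map (fun z => norm z ^ 2)).sum := by
          rw [hroots, Multiset.map_cons, Multiset.sum_cons]
      _ ≤ norm μ ^ 2 + fro B := by linarith [ih B]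
      _ ≤ fro M := hMB
      _ = fro A := fro_conj U A hU

theorem max_modulus_eigenvalue_bounds (n : ℕ) (hn : 1 ≤ n)
    (A : Matrix (Fin n) (Fin n) ℂ) (lam : ℂ)
    (hlam : lam ∈ A.charpoly.roots)
    (hmax : ∀ mu ∈ A.charpoly.roots, ‖mu‖ ≤ ‖lam‖)
    (frobSq : Matrix (Fin n) (Fin n) ℂ → ℝ)
    (hfrob : ∀ B, frobSq B = ∑ i, ∑ j, ‖B i j‖ ^ 2)
    (q : ℝ) (hq : q = frobSq A - ‖A.trace‖ ^ 2 / n) :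
    ‖A.trace‖ / n ≤ ‖lam‖ ∧
      ‖lam‖ ≤ ‖A.trace‖ / n +
        Real.sqrt (((n : ℝ) - 1) / n * q) := by
  have hfroA : frobSq A = fro A := by rw [hfrob]; rfl
  set x := norm lam with hx
  set T := norm A.trace with hT
  set N := (n : ℝ) with hN
  have hN1 : (1 : ℝ) ≤ N := by rw [hN]; exact_mod_cast hn
  have hN0 : (0 : ℝ) < N := by linarith
  have hcard : A.charpoly.roots.card = n := by
    rw [Polynomial.splits_iff_card_roots.mp (IsAlgClosed.splits A.charpoly),
      Matrix.charpoly_natDegree_eq_dim, Fintype.card_fin]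
  have htr : A.trace = A.charpoly.roots.sum := Matrix.trace_eq_sum_roots_charpoly A
  -- lower bound
  have hlow : T / N ≤ x := by
    rw [div_le_iff₀ hN0]
    have h1 : T ≤ (A.charpoly.roots.map norm).sum := by
      rw [hT, htr]; exact ms_abs_sum _
    have h2 : (A.charpoly.roots.map norm).sum ≤
        (A.charpoly.roots.map norm).card • x := by
      apply Multiset.sum_le_card_nsmul
      intro y hy
      obtain ⟨z, hz, rfl⟩ := Multiset.mem_map.mp hy
      exact hmax z hz
    rw [Multiset.card_map, hcard] at h2
    calc T ≤ (A.charpoly.roots.map norm).sum := h1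
      _ ≤ n • x := h2
      _ = x * N := by rw [nsmul_eq_mul, hN]; ring
  refine ⟨hlow, ?_⟩
  -- upper bound
  set s := A.charpoly.roots.erase lam with hs
  have hcons : A.charpoly.roots = lam ::ₘ s := (Multiset.cons_erase hlam).symm
  have hscard : (s.card : ℝ) = N - 1 := by
    have h1 : Multiset.card A.charpoly.roots = s.card + 1 := by
      rw [hcons, Multiset.card_cons]
    have h2 : s.card + 1 = n := by rw [← h1, hcard]
    have h3 : ((s.card : ℝ)) + 1 = N := by rw [hN]; exact_mod_cast h2
    linarith
  have hssum : A.trace - lam = s.sum := by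
    rw [htr, hcons, Multiset.sum_cons]; ring
  -- Cauchy–Schwarz
  have hcs : norm (A.trace - lam) ^ 2 ≤ (N - 1) * (s.map (fun z => norm z ^ 2)).sum := by
    rw [hssum, ← hscard]
    exact ms_cs s
  -- Schur bound
  have hschur := schur_sum n A
  have hsum_split : ((A.charpoly.roots).map (fun z => norm z ^ 2)).sum
      = x ^ 2 + (s.map (fun z => norm z ^ 2)).sum := by
    rw [hcons, Multiset.map_cons, Multiset.sum_cons]
  have hF : (s.map (fun z => norm z ^ 2)).sum ≤ fro A - x ^ 2 := by
    rw [hsum_split] at hschur; linarith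
  set F := fro A with hFdef
  have hqF : q = F - T ^ 2 / N := by rw [hq, hfroA]
  -- triangle-type bound: (x - T)^2 ≤ abs(trace - lam)^2
  have htri : (x - T) ^ 2 ≤ norm (A.trace - lam) ^ 2 := by
    have h1 : |T - x| ≤ norm (A.trace - lam) :=
      abs_norm_sub_norm_le A.trace lam
    have h2 : |x - T| ≤ norm (A.trace - lam) := by
      rw [abs_sub_comm]; exact h1
    calc (x - T) ^ 2 = |x - T| ^ 2 := by rw [sq_abs]
      _ ≤ norm (A.trace - lam) ^ 2 := by
          apply pow_le_pow_left₀ (abs_nonneg _) h2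
  have hmain : (x - T) ^ 2 ≤ (N - 1) * (F - x ^ 2) := by
    have hN1' : (0:ℝ) ≤ N - 1 := by linarith
    calc (x - T) ^ 2 ≤ norm (A.trace - lam) ^ 2 := htri
      _ ≤ (N - 1) * (s.map (fun z => norm z ^ 2)).sum := hcs
      _ ≤ (N - 1) * (F - x ^ 2) := by
          apply mul_le_mul_of_nonneg_left hF hN1'
  -- scaled inequality
  have key0 : (N * x - T) ^ 2 ≤ (N - 1) * (N * F - T ^ 2) := by
    have h := mul_le_mul_of_nonneg_left hmain hN0.le
    nlinarith [h]
  have key : (x - T / N) ^ 2 ≤ (N - 1) / N * q := by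
    have e1 : (x - T / N) ^ 2 = (N * x - T) ^ 2 / N ^ 2 := by
      field_simp
    have e2 : (N - 1) / N * q = (N - 1) * (N * F - T ^ 2) / N ^ 2 := by
      rw [hqF]; field_simp
    rw [e1, e2]
    apply div_le_div_of_nonneg_right key0 (by positivity)
  have hsqrt : x - T / N ≤ Real.sqrt ((N - 1) / N * q) := by
    calc x - T / N ≤ |x - T / N| := le_abs_self _
      _ = Real.sqrt ((x - T / N) ^ 2) := (Real.sqrt_sq_eq_abs _).symm
      _ ≤ Real.sqrt ((N - 1) / N * q) := Real.sqrt_le_sqrt key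
  linarith
end
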